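/- arXiv:2302.10070 — 7 statements merged into one kernel-verified Lean document; each statement's English description precedes it below -/
import Mathlib

section
/- Let f(t) = 1 - H(1/2+t) and g(t) = H((1+t)/2) - (H(1/2+t)+1)/2, where H is binary entropy base 2. Then lim_{t→0+} g(t)/f(t) = 1/4. -/
/-!
With `D(t) = ln 2 - H_e(1/2 + t)` the divergence of `Bernoulli (1/2 + t)` from the fair coin,
`f = D(t) / ln 2` and `g = (D(t)/2 - D(t/2)) / ln 2`, so `g / f = 1/2 - D(t/2) / D(t)`.
L'Hôpital gives `D(t) ~ 2 t²`, hence `D(t/2) / D(t) → 1/4` and `g / f → 1/4`.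
-/

noncomputable def binEnt (s : ℝ) : ℝ :=
  (-s * Real.log s - (1 - s) * Real.log (1 - s)) / Real.log 2

noncomputable def fJS (t : ℝ) : ℝ := 1 - binEnt (1 / 2 + t)

noncomputable def gJS (t : ℝ) : ℝ := binEnt ((1 + t) / 2) - (binEnt (1 / 2 + t) + 1) / 2

open Real Filter Set Topology

/-- The Kullback–Leibler divergence, in nats, of `Bernoulli (1/2 + t)` from `Bernoulli (1/2)`. -/
noncomputable def klBernHalf (t : ℝ) : ℝ :=
  (1 / 2 + t) * log (1 / 2 + t) + (1 / 2 - t) * log (1 / 2 - t) + log 2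

lemma fJS_eq_klBernHalf_div (t : ℝ) : fJS t = klBernHalf t / log 2 := by
  have hlog2 : log 2 ≠ 0 := (log_pos one_lt_two).ne'
  rw [fJS, binEnt, klBernHalf, show (1 : ℝ) - (1 / 2 + t) = 1 / 2 - t by ring]
  field_simp
  ring

lemma gJS_eq_klBernHalf_div (t : ℝ) :
    gJS t = (klBernHalf t / 2 - klBernHalf (t / 2)) / log 2 := by
  have hlog2 : log 2 ≠ 0 := (log_pos one_lt_two).ne'
  rw [gJS, binEnt, binEnt, klBernHalf, klBernHalf, show (1 + t) / 2 = 1 / 2 + t / 2 by ring,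
    show (1 : ℝ) - (1 / 2 + t / 2) = 1 / 2 - t / 2 by ring,
    show (1 : ℝ) - (1 / 2 + t) = 1 / 2 - t by ring]
  field_simp
  ring

lemma hasDerivAt_klBernHalf {t : ℝ} (h₁ : 1 / 2 + t ≠ 0) (h₂ : 1 / 2 - t ≠ 0) :
    HasDerivAt klBernHalf (log (1 / 2 + t) - log (1 / 2 - t)) t := by
  have hp : HasDerivAt (fun t : ℝ => 1 / 2 + t) 1 t := (hasDerivAt_id t).const_add _
  have hm : HasDerivAt (fun t : ℝ => 1 / 2 - t) (-1) t := (hasDerivAt_id t).const_sub _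
  refine (((hp.fun_mul (hp.log h₁)).fun_add (hm.fun_mul (hm.log h₂))).add_const
    (log 2)).congr_deriv ?_
  rw [mul_one_div_cancel h₁, mul_div_assoc', mul_neg_one, neg_div, div_self h₂]
  ring

lemma tendsto_klBernHalf_div_sq : Tendsto (fun t => klBernHalf t / t ^ 2) (𝓝[>] 0) (𝓝 2) := by
  have hderiv : ∀ᶠ t in 𝓝[>] (0 : ℝ),
      HasDerivAt klBernHalf (log (1 / 2 + t) - log (1 / 2 - t)) t := by
    filter_upwards [Ioo_mem_nhdsGT (show (0 : ℝ) < 1 / 2 by norm_num)] with t ht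
    exact hasDerivAt_klBernHalf (by linarith [ht.1]) (by linarith [ht.2])
  have hzero : Tendsto klBernHalf (𝓝[>] 0) (𝓝 0) := by
    have h := (hasDerivAt_klBernHalf (t := 0) (by norm_num) (by norm_num)).continuousAt.tendsto
    rw [show klBernHalf 0 = 0 by simp [klBernHalf]; ring] at h
    exact h.mono_left nhdsWithin_le_nhds
  have hslope : Tendsto (fun t => (log (1 / 2 + t) - log (1 / 2 - t)) / t) (𝓝[>] 0) (𝓝 4) := by
    have hp : HasDerivAt (fun t : ℝ => 1 / 2 + t) 1 0 := (hasDerivAt_id 0).const_add _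
    have hm : HasDerivAt (fun t : ℝ => 1 / 2 - t) (-1) 0 := (hasDerivAt_id 0).const_sub _
    have h := ((hp.log (by norm_num)).sub (hm.log (by norm_num))).tendsto_slope_zero_right
    norm_num at h
    simpa only [div_eq_inv_mul] using h
  refine HasDerivAt.lhopital_zero_nhdsGT hderiv
    (Eventually.of_forall fun t => by simpa using hasDerivAt_pow 2 t) ?_ hzero
    ((continuous_pow 2).tendsto' 0 0 (by norm_num) |>.mono_left nhdsWithin_le_nhds) ?_
  · filter_upwards [self_mem_nhdsWithin] with t ht
    exact mul_ne_zero two_ne_zero ht.ne'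
  · convert hslope.div_const 2 using 2 <;> ring

theorem tendsto_comp_const_mul_div_of_tendsto_div_pow {φ : ℝ → ℝ} {a c : ℝ} {n : ℕ}
    (ha : 0 < a) (hc : c ≠ 0) (hφ : Tendsto (fun t => φ t / t ^ n) (𝓝[>] 0) (𝓝 c)) :
    Tendsto (fun t => φ (a * t) / φ t) (𝓝[>] 0) (𝓝 (a ^ n)) := by
  have hscale : Tendsto (fun t => a * t) (𝓝[>] 0) (𝓝[>] 0) :=
    tendsto_nhdsWithin_iff.2
      ⟨((continuous_const_mul a).tendsto' 0 0 (mul_zero a)).mono_left nhdsWithin_le_nhds,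
        eventually_mem_nhdsWithin.mono fun t ht => mul_pos ha ht⟩
  have h := ((hφ.comp hscale).mul_const (a ^ n)).div hφ hc
  rw [mul_div_cancel_left₀ _ hc] at h
  refine h.congr' ?_
  filter_upwards [self_mem_nhdsWithin] with t (ht : 0 < t)
  have hrescale : φ (a * t) / (a * t) ^ n * a ^ n = φ (a * t) / t ^ n := by
    field_simp
    ring
  simp only [Pi.div_apply, Function.comp_apply]
  rw [hrescale, div_div_div_cancel_right₀ (pow_ne_zero n ht.ne')]

theorem gJS_div_fJS_tendsto :
    Filter.Tendsto (fun t => gJS t / fJS t) (nhdsWithin 0 (Set.Ioi 0)) (nhds (1 / 4)) := by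
  have hD := tendsto_klBernHalf_div_sq
  have hhalf : Tendsto (fun t => klBernHalf (t / 2) / klBernHalf t) (𝓝[>] 0) (𝓝 (1 / 4)) := by
    convert tendsto_comp_const_mul_div_of_tendsto_div_pow one_half_pos two_ne_zero hD using 2
    · ring_nf
    · norm_num
  have hD_ne : ∀ᶠ t in 𝓝[>] 0, klBernHalf t ≠ 0 :=
    (hD.eventually_ne two_ne_zero).mono fun t ht => (div_ne_zero_iff.1 ht).1
  have hlim : Tendsto (fun t => 1 / 2 - klBernHalf (t / 2) / klBernHalf t) (𝓝[>] 0) (𝓝 (1 / 4)) := by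
    convert tendsto_const_nhds.sub hhalf using 2
    norm_num
  refine hlim.congr' ?_
  filter_upwards [hD_ne] with t ht
  have hlog2 : log 2 ≠ 0 := (log_pos one_lt_two).ne'
  rw [gJS_eq_klBernHalf_div, fJS_eq_klBernHalf_div, div_div_div_cancel_right₀ hlog2]
  field_simp
end

section
/- For every α > 1/2 there exists t ∈ (0,1/2) such that (1 - H(1/2+t))^α > 2·(H((1+t)/2) - (H(1/2+t)+1)/2)^α, where H is binary entropy base 2. -/
/-!
With `g = entropyDeficit` one has `1 - H ((1 + x) / 2) = g x / (2 log 2)`.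
The two sides of the inequality are then `A t ^ α` and `2 * B t ^ α` with `A t = g (2t) / (2 log 2)`
and `B t = (g (2t) - 2 g t) / (4 log 2)`. Since `g x = x² + O(x³)` at `0`,
`A t / B t → 2 * 4 / (4 - 2) = 4` as `t → 0⁺`, and `4 ^ α > 2` exactly when `α > 1/2`.
-/

open Real Filter Topology

lemma Filter.Tendsto.eventually_mul_rpow_lt_rpow {ι : Type*} {l : Filter ι} {a b : ι → ℝ}
    {r c α : ℝ} (h : Tendsto (fun i => a i / b i) l (𝓝 r)) (hr : 0 < r) (hc : c < r ^ α)
    (hb : ∀ᶠ i in l, 0 < b i) : ∀ᶠ i in l, c * b i ^ α < a i ^ α := by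
  filter_upwards [(h.rpow_const (.inl hr.ne')).eventually (lt_mem_nhds hc),
    h.eventually (lt_mem_nhds hr), hb] with i hci hri hbi
  rw [show a i = a i / b i * b i by field_simp, mul_rpow hri.le hbi.le]
  exact mul_lt_mul_of_pos_right hci (by positivity)

noncomputable def entropyDeficit (x : ℝ) : ℝ :=
  (1 + x) * log (1 + x) + (1 - x) * log (1 - x)

lemma mul_log_div (y : ℝ) {c : ℝ} (hc : c ≠ 0) : y * log (y / c) = y * log y - y * log c := by
  rcases eq_or_ne y 0 with rfl | hy
  · simp
  · rw [log_div hy hc]; ring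

lemma binEnt_one_add_div_two (x : ℝ) :
    binEnt ((1 + x) / 2) = 1 - entropyDeficit x / (2 * log 2) := by
  have h := mul_log_div (1 + x) two_ne_zero
  have h' := mul_log_div (1 - x) two_ne_zero
  rw [binEnt, entropyDeficit, show 1 - (1 + x) / 2 = (1 - x) / 2 by ring]
  field_simp
  linear_combination (-1) * (h + h')

lemma abs_log_one_sub_add_le {x : ℝ} (hx : |x| ≤ 1 / 2) :
    |log (1 - x) + x + x ^ 2 / 2| ≤ 2 * |x| ^ 3 := by
  have h := abs_log_sub_add_sum_range_le (hx.trans_lt (by norm_num)) 2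
  norm_num [Finset.sum_range_succ] at h
  calc |log (1 - x) + x + x ^ 2 / 2| = |x + x ^ 2 / 2 + log (1 - x)| := by ring_nf
    _ ≤ |x| ^ 3 / (1 - |x|) := h
    _ ≤ 2 * |x| ^ 3 := by
      rw [div_le_iff₀ (by linarith)]
      nlinarith [pow_nonneg (abs_nonneg x) 3]

lemma abs_entropyDeficit_sub_sq_le {x : ℝ} (hx : |x| ≤ 1 / 2) :
    |entropyDeficit x - x ^ 2| ≤ 4 * |x| ^ 3 := by
  have h₁ := abs_log_one_sub_add_le (x := -x) (by rwa [abs_neg])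
  have h₂ := abs_log_one_sub_add_le hx
  rw [abs_neg, sub_neg_eq_add] at h₁
  have hx₁ : 0 ≤ 1 + x := by linarith [neg_abs_le x]
  have hx₂ : 0 ≤ 1 - x := by linarith [le_abs_self x]
  -- the quadratic Taylor polynomials of the two logarithms already sum to exactly x²
  have key : entropyDeficit x - x ^ 2 = (1 + x) * (log (1 + x) + -x + (-x) ^ 2 / 2)
      + (1 - x) * (log (1 - x) + x + x ^ 2 / 2) := by
    rw [entropyDeficit]; ring
  calc |entropyDeficit x - x ^ 2|
      ≤ (1 + x) * |log (1 + x) + -x + (-x) ^ 2 / 2| + (1 - x) * |log (1 - x) + x + x ^ 2 / 2| := by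
        rw [key]
        refine (abs_add_le _ _).trans_eq ?_
        rw [abs_mul, abs_mul, abs_of_nonneg hx₁, abs_of_nonneg hx₂]
    _ ≤ (1 + x) * (2 * |x| ^ 3) + (1 - x) * (2 * |x| ^ 3) := by gcongr
    _ = 4 * |x| ^ 3 := by ring

lemma tendsto_entropyDeficit_div_sq :
    Tendsto (fun x => entropyDeficit x / x ^ 2) (𝓝[≠] 0) (𝓝 1) := by
  have hsmall : ∀ᶠ x in 𝓝[≠] (0 : ℝ), |x| ≤ 1 / 2 := nhdsWithin_le_nhds <|
    (continuous_abs.tendsto' 0 0 abs_zero).eventually (ge_mem_nhds (by norm_num))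
  have hbound : Tendsto (fun x : ℝ => 4 * |x|) (𝓝[≠] 0) (𝓝 0) := by
    simpa using ((continuous_abs.tendsto (0 : ℝ)).const_mul 4).mono_left nhdsWithin_le_nhds
  have h : Tendsto (fun x => (entropyDeficit x - x ^ 2) / x ^ 2) (𝓝[≠] 0) (𝓝 0) := by
    refine squeeze_zero_norm' ?_ hbound
    filter_upwards [hsmall, self_mem_nhdsWithin] with x hx (hx0 : x ≠ 0)
    rw [norm_div, norm_pow, Real.norm_eq_abs, Real.norm_eq_abs, div_le_iff₀ (by positivity)]
    calc |entropyDeficit x - x ^ 2| ≤ 4 * |x| ^ 3 := abs_entropyDeficit_sub_sq_le hx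
      _ = 4 * |x| * |x| ^ 2 := by ring
  refine (zero_add (1 : ℝ) ▸ h.add_const 1).congr' ?_
  filter_upwards [self_mem_nhdsWithin] with x (hx : x ≠ 0)
  field_simp
  ring

lemma tendsto_entropyDeficit_two_mul_div_sq :
    Tendsto (fun x => entropyDeficit (2 * x) / x ^ 2) (𝓝[≠] 0) (𝓝 4) := by
  have htwo : Tendsto (fun x : ℝ => 2 * x) (𝓝[≠] 0) (𝓝[≠] 0) := by
    simpa using ((hasDerivAt_id (0 : ℝ)).const_mul 2).tendsto_nhdsNE (by norm_num)
  have h := (tendsto_entropyDeficit_div_sq.comp htwo).const_mul 4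
  rw [mul_one] at h
  refine h.congr fun x => ?_
  simp only [Function.comp_apply]
  ring

lemma tendsto_entropyDeficit_sub_div_sq :
    Tendsto (fun x => (entropyDeficit (2 * x) - 2 * entropyDeficit x) / x ^ 2) (𝓝[≠] 0)
      (𝓝 2) := by
  convert tendsto_entropyDeficit_two_mul_div_sq.sub
    (tendsto_entropyDeficit_div_sq.const_mul 2) using 1
  · ext x; ring
  · norm_num

lemma eventually_two_mul_entropyDeficit_lt :
    ∀ᶠ x in 𝓝[≠] 0, 2 * entropyDeficit x < entropyDeficit (2 * x) := by
  filter_upwards [tendsto_entropyDeficit_sub_div_sq.eventually (lt_mem_nhds two_pos),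
    self_mem_nhdsWithin] with x hx (hx0 : x ≠ 0)
  rw [lt_div_iff₀ (by positivity), zero_mul] at hx
  linarith

lemma tendsto_entropyDeficit_two_mul_div_sub :
    Tendsto (fun x => entropyDeficit (2 * x) / (entropyDeficit (2 * x) - 2 * entropyDeficit x))
      (𝓝[≠] 0) (𝓝 2) := by
  have h := tendsto_entropyDeficit_two_mul_div_sq.div tendsto_entropyDeficit_sub_div_sq two_ne_zero
  norm_num at h
  refine h.congr' ?_
  filter_upwards [self_mem_nhdsWithin] with x (hx : x ≠ 0)
  rw [Pi.div_apply, div_div_div_cancel_right₀ (by positivity)]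

theorem exists_power_triangle_violation (α : ℝ) (hα : 1 / 2 < α) :
    ∃ t ∈ Set.Ioo (0 : ℝ) (1 / 2),
      (1 - binEnt (1 / 2 + t)) ^ α
        > 2 * (binEnt ((1 + t) / 2) - (binEnt (1 / 2 + t) + 1) / 2) ^ α := by
  have h4 : 2 < (4 : ℝ) ^ α := calc
    (2 : ℝ) = 4 ^ (1 / 2 : ℝ) := by
      rw [show (4 : ℝ) = 2 ^ (2 : ℝ) by norm_num, ← rpow_mul zero_le_two]; norm_num
    _ < 4 ^ α := rpow_lt_rpow_of_exponent_lt (by norm_num) hα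
  set A := fun t => entropyDeficit (2 * t) / (2 * log 2)
  set B := fun t => (entropyDeficit (2 * t) - 2 * entropyDeficit t) / (4 * log 2)
  have hB : ∀ᶠ t in 𝓝[≠] 0, 0 < B t :=
    eventually_two_mul_entropyDeficit_lt.mono fun t ht => div_pos (by linarith) (by positivity)
  have hAB : Tendsto (fun t => A t / B t) (𝓝[≠] 0) (𝓝 4) := by
    have h := tendsto_entropyDeficit_two_mul_div_sub.const_mul 2
    rw [two_mul, two_add_two_eq_four] at h
    refine h.congr' (eventually_two_mul_entropyDeficit_lt.mono fun t ht => ?_)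
    have : entropyDeficit (2 * t) - 2 * entropyDeficit t ≠ 0 := (sub_pos.2 ht).ne'
    simp only [A, B]
    field_simp
    ring
  have hIoo : ∀ᶠ t in 𝓝[>] (0 : ℝ), t ∈ Set.Ioo 0 (1 / 2) := Ioo_mem_nhdsGT (by norm_num)
  obtain ⟨t, ht, hlt⟩ := (hIoo.and ((hAB.eventually_mul_rpow_lt_rpow four_pos h4 hB).filter_mono
    (nhdsGT_le_nhdsNE 0))).exists
  refine ⟨t, ht, ?_⟩
  rw [show 1 / 2 + t = (1 + 2 * t) / 2 by ring, binEnt_one_add_div_two, binEnt_one_add_div_two]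
  convert hlt using 3 <;> ring
end

section
/- For any continuous f on (0,∞) and Cauchy densities with parameters (μ1,σ1), (μ2,σ2), the f-divergence D_f(p_{μ1,σ1} : p_{μ2,σ2}) = ∫_ℝ f(p_{μ2,σ2}(x)/p_{μ1,σ1}(x)) p_{μ1,σ1}(x) dx equals (1/π)∫_0^π f(1/(ζ + √(ζ²-1)·cos θ)) dθ, where ζ = 1 + ((μ2-μ1)² + (σ2-σ1)²)/(2σ1σ2). -/
/-!
Substituting `x = μ₁ + σ₁ tan φ` maps `(-π/2, π/2)` onto `ℝ` and turns `p_{μ₁,σ₁}(x) dx` into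
`dφ / π`. In the new variable the likelihood ratio is `1 / (ζ + A cos 2φ + B sin 2φ)` with
`A² + B² = ζ² - 1`, i.e. `1 / (ζ + √(ζ² - 1) cos (2φ - ψ))` for some phase `ψ`. Finally
`θ = 2φ - ψ` sweeps a full period of `cos`, and since `cos` is even the integral over a period is
twice the integral over `[0, π]`.
-/

open MeasureTheory

noncomputable def cauchyPdf (μ σ x : ℝ) : ℝ := (σ / Real.pi) * (1 / ((x - μ) ^ 2 + σ ^ 2))

open Real Set

lemma exists_mul_cos_add_mul_sin_eq (A B : ℝ) :
    ∃ ψ, ∀ t, A * cos t + B * sin t = √(A ^ 2 + B ^ 2) * cos (t - ψ) := by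
  refine ⟨Complex.arg ⟨A, B⟩, fun t => ?_⟩
  have hnorm : ‖(⟨A, B⟩ : ℂ)‖ = √(A ^ 2 + B ^ 2) := by
    rw [Complex.norm_def, Complex.normSq_apply]
    ring_nf
  have hA : ‖(⟨A, B⟩ : ℂ)‖ * cos (Complex.arg ⟨A, B⟩) = A := Complex.norm_mul_cos_arg _
  have hB : ‖(⟨A, B⟩ : ℂ)‖ * sin (Complex.arg ⟨A, B⟩) = B := Complex.norm_mul_sin_arg _
  rw [cos_sub, ← hnorm]
  linear_combination -cos t * hA - sin t * hB

section Integrals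

variable {E : Type*} [NormedAddCommGroup E] [NormedSpace ℝ E]

lemma intervalIntegral_neg_eq_two_smul_of_even {h : ℝ → E} (heven : ∀ x, h (-x) = h x)
    (a : ℝ) : ∫ x in -a..a, h x = (2 : ℝ) • ∫ x in 0..a, h x := by
  have hsymm : ∫ x in -a..0, h x = ∫ x in 0..a, h x := by
    simpa [heven] using (intervalIntegral.integral_comp_neg (a := 0) (b := a) h).symm
  by_cases hint : IntervalIntegrable h volume 0 a
  · have hint' : IntervalIntegrable h volume (-a) 0 := by
      simpa [heven] using ((IntervalIntegrable.iff_comp_neg (f := h)).mp hint).symm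
    rw [← intervalIntegral.integral_add_adjacent_intervals hint' hint, hsymm, two_smul]
  · have hint' : ¬ IntervalIntegrable h volume (-a) a := fun H =>
      hint (H.mono_set (uIcc_subset_uIcc (by rw [mem_uIcc]; grind) right_mem_uIcc))
    rw [intervalIntegral.integral_undef hint, intervalIntegral.integral_undef hint', smul_zero]

lemma setIntegral_comp_cos_two_mul_sub (k : ℝ → E) (ψ : ℝ) :
    ∫ φ in Ioo (-(π / 2)) (π / 2), k (cos (2 * φ - ψ)) = ∫ θ in 0..π, k (cos θ) := by
  have hper : Function.Periodic (fun θ => k (cos θ)) (2 * π) := fun θ => by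
    simp only [cos_add_two_pi]
  rw [← integral_Ioc_eq_integral_Ioo, ← intervalIntegral.integral_of_le (by linarith [pi_pos]),
    intervalIntegral.integral_comp_mul_sub (fun θ => k (cos θ)) two_ne_zero,
    show 2 * -(π / 2) - ψ = -π - ψ by ring, show 2 * (π / 2) - ψ = -π - ψ + 2 * π by ring,
    hper.intervalIntegral_add_eq _ (-π), show -π + 2 * π = π by ring,
    intervalIntegral_neg_eq_two_smul_of_even (fun θ => by simp only [cos_neg]),
    inv_smul_smul₀ two_ne_zero]

lemma integral_eq_setIntegral_comp_tan (g : ℝ → E) (μ : ℝ) {σ : ℝ} (hσ : 0 < σ) :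
    ∫ x, g x = ∫ φ in Ioo (-(π / 2)) (π / 2), (σ / cos φ ^ 2) • g (μ + σ * tan φ) := by
  have himage : (fun φ => μ + σ * tan φ) '' Ioo (-(π / 2)) (π / 2) = univ := by
    rw [← image_image (fun y => μ + σ * y), image_tan_Ioo, image_univ]
    exact Function.Surjective.range_eq fun x => ⟨(x - μ) / σ, by field_simp; ring⟩
  have hderiv : ∀ φ ∈ Ioo (-(π / 2)) (π / 2),
      HasDerivWithinAt (fun φ => μ + σ * tan φ) (σ / cos φ ^ 2) (Ioo (-(π / 2)) (π / 2)) φ :=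
    fun φ hφ => by
      simpa [div_eq_mul_inv] using
        (((hasDerivAt_tan (cos_pos_of_mem_Ioo hφ).ne').const_mul σ).const_add μ).hasDerivWithinAt
  have hinj : InjOn (fun φ => μ + σ * tan φ) (Ioo (-(π / 2)) (π / 2)) := fun a ha b hb hab =>
    injOn_tan ha hb (mul_left_cancel₀ hσ.ne' (add_left_cancel hab))
  rw [← setIntegral_univ, ← himage,
    integral_image_eq_integral_abs_deriv_smul measurableSet_Ioo hderiv hinj]
  refine setIntegral_congr_fun measurableSet_Ioo fun φ hφ => ?_
  rw [abs_of_pos (div_pos hσ (pow_pos (cos_pos_of_mem_Ioo hφ) 2))]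

end Integrals

lemma cauchyPdf_tan (μ : ℝ) {σ φ : ℝ} (hσ : σ ≠ 0) (hφ : cos φ ≠ 0) :
    cauchyPdf μ σ (μ + σ * tan φ) = cos φ ^ 2 / (π * σ) := by
  rw [cauchyPdf, tan_eq_sin_div_cos]
  field_simp
  linear_combination -σ ^ 2 * sin_sq_add_cos_sq φ

lemma integral_mul_cauchyPdf (F : ℝ → ℝ) (μ : ℝ) {σ : ℝ} (hσ : 0 < σ) :
    ∫ x, F x * cauchyPdf μ σ x = 1 / π * ∫ φ in Ioo (-(π / 2)) (π / 2), F (μ + σ * tan φ) := by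
  rw [integral_eq_setIntegral_comp_tan _ μ hσ, ← integral_const_mul]
  refine setIntegral_congr_fun measurableSet_Ioo fun φ hφ => ?_
  have hcos := (cos_pos_of_mem_Ioo hφ).ne'
  rw [smul_eq_mul, cauchyPdf_tan μ hσ.ne' hcos]
  field_simp

noncomputable def cauchyZeta (μ₁ μ₂ σ₁ σ₂ : ℝ) : ℝ :=
  1 + ((μ₂ - μ₁) ^ 2 + (σ₂ - σ₁) ^ 2) / (2 * σ₁ * σ₂)

lemma cauchyPdf_div_cauchyPdf_tan (μ₁ μ₂ : ℝ) {σ₁ σ₂ φ : ℝ} (h₁ : 0 < σ₁) (h₂ : 0 < σ₂)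
    (hφ : cos φ ≠ 0) :
    cauchyPdf μ₂ σ₂ (μ₁ + σ₁ * tan φ) / cauchyPdf μ₁ σ₁ (μ₁ + σ₁ * tan φ) =
      1 / (cauchyZeta μ₁ μ₂ σ₁ σ₂
        + ((μ₂ - μ₁) ^ 2 + σ₂ ^ 2 - σ₁ ^ 2) / (2 * σ₁ * σ₂) * cos (2 * φ)
        + -(μ₂ - μ₁) / σ₂ * sin (2 * φ)) := by
  set D := cauchyZeta μ₁ μ₂ σ₁ σ₂
    + ((μ₂ - μ₁) ^ 2 + σ₂ ^ 2 - σ₁ ^ 2) / (2 * σ₁ * σ₂) * cos (2 * φ)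
    + -(μ₂ - μ₁) / σ₂ * sin (2 * φ) with hD
  have hquad : (μ₁ + σ₁ * tan φ - μ₂) ^ 2 + σ₂ ^ 2 = σ₁ * σ₂ / cos φ ^ 2 * D := by
    rw [hD, cauchyZeta, tan_eq_sin_div_cos, cos_two_mul, sin_two_mul]
    field_simp
    linear_combination 2 * σ₁ ^ 2 * sin_sq_add_cos_sq φ
  have hDpos : 0 < D := by
    have : 0 < σ₁ * σ₂ / cos φ ^ 2 * D := hquad ▸ by positivity
    exact pos_of_mul_pos_right this (by positivity)
  rw [cauchyPdf_tan μ₁ h₁.ne' hφ, cauchyPdf, hquad]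
  field_simp

lemma exists_cauchyPdf_div_cauchyPdf_tan_eq (μ₁ μ₂ : ℝ) {σ₁ σ₂ : ℝ} (h₁ : 0 < σ₁)
    (h₂ : 0 < σ₂) :
    ∃ ψ, ∀ φ, cos φ ≠ 0 →
      cauchyPdf μ₂ σ₂ (μ₁ + σ₁ * tan φ) / cauchyPdf μ₁ σ₁ (μ₁ + σ₁ * tan φ) =
        1 / (cauchyZeta μ₁ μ₂ σ₁ σ₂ + √(cauchyZeta μ₁ μ₂ σ₁ σ₂ ^ 2 - 1) * cos (2 * φ - ψ)) := by
  set A := ((μ₂ - μ₁) ^ 2 + σ₂ ^ 2 - σ₁ ^ 2) / (2 * σ₁ * σ₂)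
  set B := -(μ₂ - μ₁) / σ₂
  have hAB : A ^ 2 + B ^ 2 = cauchyZeta μ₁ μ₂ σ₁ σ₂ ^ 2 - 1 := by
    simp only [A, B, cauchyZeta]
    field_simp
    ring
  obtain ⟨ψ, hψ⟩ := exists_mul_cos_add_mul_sin_eq A B
  refine ⟨ψ, fun φ hφ => ?_⟩
  rw [cauchyPdf_div_cauchyPdf_tan μ₁ μ₂ h₁ h₂ hφ, add_assoc, hψ, hAB]

theorem cauchy_fDiv_formula_general (f : ℝ → ℝ)
    (μ₁ μ₂ σ₁ σ₂ : ℝ) (h₁ : 0 < σ₁) (h₂ : 0 < σ₂) :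
    ∫ x, f (cauchyPdf μ₂ σ₂ x / cauchyPdf μ₁ σ₁ x) * cauchyPdf μ₁ σ₁ x
      = (1 / Real.pi) * ∫ θ in (0 : ℝ)..Real.pi,
          f (1 / ((1 + ((μ₂ - μ₁) ^ 2 + (σ₂ - σ₁) ^ 2) / (2 * σ₁ * σ₂))
              + Real.sqrt ((1 + ((μ₂ - μ₁) ^ 2 + (σ₂ - σ₁) ^ 2) / (2 * σ₁ * σ₂)) ^ 2 - 1)
                * Real.cos θ)) := by
  set ζ := cauchyZeta μ₁ μ₂ σ₁ σ₂
  obtain ⟨ψ, hψ⟩ := exists_cauchyPdf_div_cauchyPdf_tan_eq μ₁ μ₂ h₁ h₂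
  calc _ = 1 / π * ∫ φ in Ioo (-(π / 2)) (π / 2),
          f (1 / (ζ + √(ζ ^ 2 - 1) * cos (2 * φ - ψ))) := by
        rw [integral_mul_cauchyPdf _ μ₁ h₁]
        congr 1
        exact setIntegral_congr_fun measurableSet_Ioo fun φ hφ => by
          rw [hψ φ (cos_pos_of_mem_Ioo hφ).ne']
    _ = _ := congrArg _
          (setIntegral_comp_cos_two_mul_sub (fun c => f (1 / (ζ + √(ζ ^ 2 - 1) * c))) ψ)

theorem cauchy_fDiv_formula (f : ℝ → ℝ) (hf : ContinuousOn f (Set.Ioi 0))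
    (μ₁ μ₂ σ₁ σ₂ : ℝ) (h₁ : 0 < σ₁) (h₂ : 0 < σ₂)
    (hInt : Integrable (fun x => f (cauchyPdf μ₂ σ₂ x / cauchyPdf μ₁ σ₁ x) * cauchyPdf μ₁ σ₁ x)) :
    ∫ x, f (cauchyPdf μ₂ σ₂ x / cauchyPdf μ₁ σ₁ x) * cauchyPdf μ₁ σ₁ x
      = (1 / Real.pi) * ∫ θ in (0 : ℝ)..Real.pi,
          f (1 / ((1 + ((μ₂ - μ₁) ^ 2 + (σ₂ - σ₁) ^ 2) / (2 * σ₁ * σ₂))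
              + Real.sqrt ((1 + ((μ₂ - μ₁) ^ 2 + (σ₂ - σ₁) ^ 2) / (2 * σ₁ * σ₂)) ^ 2 - 1)
                * Real.cos θ)) :=
  cauchy_fDiv_formula_general f μ₁ μ₂ σ₁ σ₂ h₁ h₂
end

section
/- The f-divergence between two univariate Cauchy distributions is symmetric: D_f(p_{μ1,σ1} : p_{μ2,σ2}) = D_f(p_{μ2,σ2} : p_{μ1,σ1}) for every continuous f on (0,∞) for which the defining integrals exist. -/
open MeasureTheory

/-!
Identify the Cauchy law `p_{μ,σ}` with the point `θ = μ + iσ` of the upper half-plane; a real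
Möbius map pushes the Cauchy law of `θ` forward to that of `g θ`. Writing `μ₁ = x₀ + σ₁ t` and
`μ₂ = x₀ - σ₂ t`, one has `(θ₁ - x₀) (θ₂ - x₀) = -K` with `K = σ₁ σ₂ (1 + t²)`, so the involution
`g x = x₀ - K / (x - x₀)` swaps `θ₁` and `θ₂`, hence swaps `p₁ dx` and `p₂ dx`, and it exchanges
the two half-lines on either side of `x₀`. Substituting `g` on `(x₀, ∞)` turns the integrand of
`D_f(p₁ : p₂)` into that of `D_f(p₂ : p₁)` on `(-∞, x₀)`, and vice versa.
-/

open Set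

lemma setIntegral_Ioi_eq_setIntegral_Iio_inversion {E : Type*} [NormedAddCommGroup E]
    [NormedSpace ℝ E] (F : ℝ → E) (x₀ : ℝ) {K : ℝ} (hK : 0 < K) :
    ∫ x in Ioi x₀, F x = ∫ x in Iio x₀, (K / (x - x₀) ^ 2) • F (x₀ - K / (x - x₀)) := by
  set g : ℝ → ℝ := fun x => x₀ - K / (x - x₀)
  have hg_sub (x : ℝ) : g x - x₀ = -K / (x - x₀) := by simp only [g]; ring
  have hg_invol (x : ℝ) (hx : x ≠ x₀) : g (g x) = x := by
    have : x - x₀ ≠ 0 := sub_ne_zero.mpr hx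
    simp only [g, sub_sub_cancel_left]
    field_simp
    ring
  have hg_deriv : ∀ x ∈ Iio x₀, HasDerivWithinAt g (K / (x - x₀) ^ 2) (Iio x₀) x := by
    intro x hx
    have hx : x - x₀ ≠ 0 := sub_ne_zero.mpr (ne_of_lt hx)
    have := ((hasDerivAt_const x K).div ((hasDerivAt_id' x).sub_const x₀) hx).const_sub x₀
    rw [zero_mul, mul_one, zero_sub, neg_div, neg_neg] at this
    exact this.hasDerivWithinAt
  have hg_inj : InjOn g (Iio x₀) := fun x hx y hy hxy => by
    rw [← hg_invol x hx.ne, ← hg_invol y hy.ne, hxy]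
  have hg_image : g '' Iio x₀ = Ioi x₀ := by
    ext y
    constructor
    · rintro ⟨x, hx, rfl⟩
      rw [mem_Ioi, ← sub_pos, hg_sub]
      exact div_pos_of_neg_of_neg (neg_neg_of_pos hK) (sub_neg.mpr hx)
    · intro hy
      refine ⟨g y, ?_, hg_invol y hy.ne'⟩
      rw [mem_Iio, ← sub_neg, hg_sub]
      exact div_neg_of_neg_of_pos (neg_neg_of_pos hK) (sub_pos.mpr hy)
  rw [← hg_image, integral_image_eq_integral_abs_deriv_smul measurableSet_Iio hg_deriv hg_inj]
  refine setIntegral_congr_fun measurableSet_Iio fun x _ => ?_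
  rw [abs_of_nonneg (by positivity)]

lemma cauchyPdf_inversion {σ₁ σ₂ : ℝ} (x₀ t : ℝ) (h₁ : 0 < σ₁) (h₂ : 0 < σ₂) {x : ℝ}
    (hx : x ≠ x₀) :
    σ₁ * σ₂ * (1 + t ^ 2) / (x - x₀) ^ 2 *
        cauchyPdf (x₀ - σ₂ * t) σ₂ (x₀ - σ₁ * σ₂ * (1 + t ^ 2) / (x - x₀))
      = cauchyPdf (x₀ + σ₁ * t) σ₁ x := by
  obtain ⟨u, rfl⟩ : ∃ u, x = x₀ + u := ⟨x - x₀, by ring⟩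
  have hu : u ≠ 0 := by simpa using hx
  have := Real.pi_pos
  simp only [cauchyPdf, add_sub_cancel_left]
  field_simp
  ring

lemma setIntegral_Ioi_cauchy_fDiv (f : ℝ → ℝ) {σ₁ σ₂ : ℝ} (x₀ t : ℝ) (h₁ : 0 < σ₁)
    (h₂ : 0 < σ₂) :
    ∫ x in Ioi x₀, f (cauchyPdf (x₀ - σ₂ * t) σ₂ x / cauchyPdf (x₀ + σ₁ * t) σ₁ x) *
        cauchyPdf (x₀ + σ₁ * t) σ₁ x
      = ∫ x in Iio x₀, f (cauchyPdf (x₀ + σ₁ * t) σ₁ x / cauchyPdf (x₀ - σ₂ * t) σ₂ x) *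
        cauchyPdf (x₀ - σ₂ * t) σ₂ x := by
  have hK : 0 < σ₁ * σ₂ * (1 + t ^ 2) := by positivity
  rw [setIntegral_Ioi_eq_setIntegral_Iio_inversion _ x₀ hK]
  refine setIntegral_congr_fun measurableSet_Iio fun x hx => ?_
  have hx : x ≠ x₀ := ne_of_lt hx
  have hw : σ₁ * σ₂ * (1 + t ^ 2) / (x - x₀) ^ 2 ≠ 0 := by
    have : x - x₀ ≠ 0 := sub_ne_zero.mpr hx
    positivity
  have h₁₂ := cauchyPdf_inversion x₀ t h₁ h₂ hx
  have h₂₁ := cauchyPdf_inversion x₀ (-t) h₂ h₁ hx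
  rw [mul_comm σ₂ σ₁, neg_sq] at h₂₁
  simp only [mul_neg, sub_neg_eq_add, ← sub_eq_add_neg] at h₂₁
  rw [smul_eq_mul, ← h₁₂, ← h₂₁, mul_div_mul_left _ _ hw]
  ring

lemma integral_Iio_add_Ioi {E : Type*} [NormedAddCommGroup E] [NormedSpace ℝ E] {f : ℝ → E}
    {μ : Measure ℝ} [NullSingletonClass μ] (hf : Integrable f μ) (b : ℝ) :
    ∫ x in Iio b, f x ∂μ + ∫ x in Ioi b, f x ∂μ = ∫ x, f x ∂μ := by
  rw [setIntegral_congr_set Ioi_ae_eq_Ici]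
  exact intervalIntegral.integral_Iio_add_Ici hf.integrableOn hf.integrableOn

theorem cauchy_fDiv_symm_general (f : ℝ → ℝ)
    (μ₁ μ₂ σ₁ σ₂ : ℝ) (h₁ : 0 < σ₁) (h₂ : 0 < σ₂)
    (hInt₁ : Integrable
      (fun x => f (cauchyPdf μ₂ σ₂ x / cauchyPdf μ₁ σ₁ x) * cauchyPdf μ₁ σ₁ x))
    (hInt₂ : Integrable
      (fun x => f (cauchyPdf μ₁ σ₁ x / cauchyPdf μ₂ σ₂ x) * cauchyPdf μ₂ σ₂ x)) :
    ∫ x, f (cauchyPdf μ₂ σ₂ x / cauchyPdf μ₁ σ₁ x) * cauchyPdf μ₁ σ₁ x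
      = ∫ x, f (cauchyPdf μ₁ σ₁ x / cauchyPdf μ₂ σ₂ x) * cauchyPdf μ₂ σ₂ x := by
  obtain ⟨x₀, t, rfl, rfl⟩ : ∃ x₀ t, μ₁ = x₀ + σ₁ * t ∧ μ₂ = x₀ - σ₂ * t := by
    have : σ₁ + σ₂ ≠ 0 := by positivity
    refine ⟨(μ₁ * σ₂ + μ₂ * σ₁) / (σ₁ + σ₂), (μ₁ - μ₂) / (σ₁ + σ₂), ?_, ?_⟩ <;>
      field_simp <;> ring
  have h_right₁ := setIntegral_Ioi_cauchy_fDiv f x₀ t h₁ h₂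
  have h_right₂ := setIntegral_Ioi_cauchy_fDiv f x₀ (-t) h₂ h₁
  simp only [mul_neg, sub_neg_eq_add, ← sub_eq_add_neg] at h_right₂
  rw [← integral_Iio_add_Ioi hInt₁ x₀, ← integral_Iio_add_Ioi hInt₂ x₀, h_right₁, h_right₂,
    add_comm]

theorem cauchy_fDiv_symm (f : ℝ → ℝ) (hf : ContinuousOn f (Set.Ioi 0))
    (μ₁ μ₂ σ₁ σ₂ : ℝ) (h₁ : 0 < σ₁) (h₂ : 0 < σ₂)
    (hInt₁ : Integrable
      (fun x => f (cauchyPdf μ₂ σ₂ x / cauchyPdf μ₁ σ₁ x) * cauchyPdf μ₁ σ₁ x))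
    (hInt₂ : Integrable
      (fun x => f (cauchyPdf μ₁ σ₁ x / cauchyPdf μ₂ σ₂ x) * cauchyPdf μ₂ σ₂ x)) :
    ∫ x, f (cauchyPdf μ₂ σ₂ x / cauchyPdf μ₁ σ₁ x) * cauchyPdf μ₁ σ₁ x
      = ∫ x, f (cauchyPdf μ₁ σ₁ x / cauchyPdf μ₂ σ₂ x) * cauchyPdf μ₂ σ₂ x :=
  cauchy_fDiv_symm_general f μ₁ μ₂ σ₁ σ₂ h₁ h₂ hInt₁ hInt₂
end

section
/- Define h(t) = (1/π)∫_0^π f(1/(cosh t + sinh t · cos θ)) dθ for t ≥ 0, where f is convex on (0,∞), f(1)=0, f is C² near 1, and f''(1) > 0. Then h(t) → 0, h'(t) → 0, and h''(t) → f''(1)/2 as t → 0+. -/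
noncomputable def hDiv (f : ℝ → ℝ) (t : ℝ) : ℝ :=
  (1 / Real.pi) * ∫ θ in (0 : ℝ)..Real.pi,
    f (1 / (Real.cosh t + Real.sinh t * Real.cos θ))

open Real Set Filter Topology MeasureTheory intervalIntegral Function
open scoped Interval

/-!
With `x(t, θ) = 1 / (cosh t + sinh t cos θ)` we have `exp (-|t|) ≤ x(t, θ) ≤ exp |t|`, so for small
`|t|` the argument stays in the interval where `f` is `C²`. There `h` can be differentiated twice
under the integral sign, and `h`, `h'`, `h''` are continuous. Since `x(0, θ) = 1`,
`∂ₜx(0, θ) = -cos θ` and `∂ₜ²x(0, θ) = 2 cos² θ - 1`, their values at `0` are `f 1 = 0`,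
`-f'(1) · avg cos = 0` and `f''(1) · avg cos² + f'(1) · avg (2 cos² - 1) = f''(1) / 2`.
-/

section ParametricIntegral

variable {G G' : ℝ → ℝ → ℝ} {U : Set ℝ} {t₀ : ℝ}

theorem exists_ball_bound_of_continuousOn (hU : IsOpen U)
    (hG : ContinuousOn (uncurry G) (U ×ˢ univ)) (ht₀ : t₀ ∈ U) (a b : ℝ) :
    ∃ r > 0, ∃ C, ∀ t ∈ Metric.ball t₀ r, ∀ θ ∈ [[a, b]], ‖G t θ‖ ≤ C := by
  obtain ⟨r, hr, hrU⟩ := Metric.isOpen_iff.1 hU t₀ ht₀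
  have hK : Metric.closedBall t₀ (r / 2) ×ˢ [[a, b]] ⊆ U ×ˢ univ :=
    prod_mono ((Metric.closedBall_subset_ball (half_lt_self hr)).trans hrU) (subset_univ _)
  obtain ⟨C, hC⟩ := ((isCompact_closedBall t₀ _).prod isCompact_uIcc).exists_bound_of_continuousOn
    (hG.mono hK)
  exact ⟨r / 2, half_pos hr, C, fun t ht θ hθ => hC (t, θ) ⟨Metric.ball_subset_closedBall ht, hθ⟩⟩

theorem continuous_of_continuousOn_prod_univ (hG : ContinuousOn (uncurry G) (U ×ˢ univ))
    {t : ℝ} (ht : t ∈ U) : Continuous (G t) :=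
  hG.comp_continuous (Continuous.prodMk_right t) fun _ => ⟨ht, trivial⟩

theorem continuousAt_intervalIntegral_of_continuousOn (hU : IsOpen U)
    (hG : ContinuousOn (uncurry G) (U ×ˢ univ)) (ht₀ : t₀ ∈ U) (a b : ℝ) :
    ContinuousAt (fun t => ∫ θ in a..b, G t θ) t₀ := by
  obtain ⟨r, hr, C, hC⟩ := exists_ball_bound_of_continuousOn hU hG ht₀ a b
  refine continuousAt_of_dominated_interval (bound := fun _ => C) ?_ ?_ intervalIntegrable_const ?_
  · filter_upwards [hU.mem_nhds ht₀] with t ht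
    exact (continuous_of_continuousOn_prod_univ hG ht).aestronglyMeasurable
  · filter_upwards [Metric.ball_mem_nhds t₀ hr] with t ht
    exact .of_forall fun θ hθ => hC t ht θ (uIoc_subset_uIcc hθ)
  · exact .of_forall fun θ _ =>
      ContinuousAt.comp (g := uncurry G) (f := fun t => (t, θ))
        (hG.continuousAt (prod_mem_nhds (hU.mem_nhds ht₀) univ_mem))
        (Continuous.prodMk_left θ).continuousAt

theorem hasDerivAt_intervalIntegral_of_continuousOn (hU : IsOpen U)
    (hG : ContinuousOn (uncurry G) (U ×ˢ univ)) (hG' : ContinuousOn (uncurry G') (U ×ˢ univ))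
    (hderiv : ∀ t ∈ U, ∀ θ, HasDerivAt (G · θ) (G' t θ) t) (ht₀ : t₀ ∈ U) (a b : ℝ) :
    HasDerivAt (fun t => ∫ θ in a..b, G t θ) (∫ θ in a..b, G' t₀ θ) t₀ := by
  obtain ⟨r, hr, C, hC⟩ := exists_ball_bound_of_continuousOn hU hG' ht₀ a b
  obtain ⟨r', hr', hr'U⟩ := Metric.isOpen_iff.1 hU t₀ ht₀
  have hball : Metric.ball t₀ (min r r') ⊆ U :=
    (Metric.ball_subset_ball (min_le_right _ _)).trans hr'U
  refine (hasDerivAt_integral_of_dominated_loc_of_deriv_le (bound := fun _ => C)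
    (Metric.ball_mem_nhds t₀ (lt_min hr hr')) ?_
    ((continuous_of_continuousOn_prod_univ hG ht₀).intervalIntegrable a b)
    (continuous_of_continuousOn_prod_univ hG' ht₀).aestronglyMeasurable ?_
    intervalIntegrable_const ?_).2
  · filter_upwards [hU.mem_nhds ht₀] with t ht
    exact (continuous_of_continuousOn_prod_univ hG ht).aestronglyMeasurable
  · exact .of_forall fun θ hθ t ht =>
      hC t (Metric.ball_subset_ball (min_le_left _ _) ht) θ (uIoc_subset_uIcc hθ)
  · exact .of_forall fun θ _ t ht => hderiv t (hball ht) θ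

end ParametricIntegral

noncomputable def hypDenom (t θ : ℝ) : ℝ := cosh t + sinh t * cos θ

noncomputable def hypDenom' (t θ : ℝ) : ℝ := sinh t + cosh t * cos θ

-- Written as `1 / _` so that `hDiv f t = 1 / π * ∫ θ in 0..π, f (hypArg t θ)` holds by `rfl`.
noncomputable def hypArg (t θ : ℝ) : ℝ := 1 / hypDenom t θ

noncomputable def hypArgDeriv (t θ : ℝ) : ℝ := -hypDenom' t θ / hypDenom t θ ^ 2

noncomputable def hypArgDeriv2 (t θ : ℝ) : ℝ :=
  2 * hypDenom' t θ ^ 2 / hypDenom t θ ^ 3 - 1 / hypDenom t θ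

theorem hypDenom_mem_Icc (t θ : ℝ) : hypDenom t θ ∈ Icc (exp (-|t|)) (exp |t|) := by
  have hcos : |sinh t * cos θ| ≤ |sinh t| := by
    rw [abs_mul]
    exact mul_le_of_le_one_right (abs_nonneg _) (abs_cos_le_one θ)
  have hsub : exp (-|t|) = cosh t - |sinh t| := by
    rw [abs_sinh, ← cosh_abs t, cosh_sub_sinh]
  have hadd : exp |t| = cosh t + |sinh t| := by
    rw [abs_sinh, ← cosh_abs t, cosh_add_sinh]
  constructor <;> unfold hypDenom <;> linarith [abs_le.1 hcos]

theorem hypDenom_pos (t θ : ℝ) : 0 < hypDenom t θ :=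
  (exp_pos _).trans_le (hypDenom_mem_Icc t θ).1

theorem hypArg_mem_Icc (t θ : ℝ) : hypArg t θ ∈ Icc (exp (-|t|)) (exp |t|) := by
  obtain ⟨hlo, hhi⟩ := hypDenom_mem_Icc t θ
  rw [hypArg, one_div]
  constructor
  · simpa only [exp_neg] using inv_anti₀ (hypDenom_pos t θ) hhi
  · simpa only [exp_neg, inv_inv] using inv_anti₀ (exp_pos _) hlo

theorem hypArg_mem_Ioo {ε t : ℝ} (hε : 0 < ε) (ht : |t| < log (1 + ε)) (θ : ℝ) :
    hypArg t θ ∈ Ioo (1 - ε) (1 + ε) := by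
  obtain ⟨hlo, hhi⟩ := hypArg_mem_Icc t θ
  have hexp : exp (log (1 + ε)) = 1 + ε := exp_log (by linarith)
  constructor
  · calc 1 - ε ≤ 1 / (1 + ε) := by rw [le_div_iff₀ (by linarith)]; nlinarith
      _ = exp (-log (1 + ε)) := by rw [exp_neg, hexp, one_div]
      _ < exp (-|t|) := exp_lt_exp.2 (neg_lt_neg ht)
      _ ≤ hypArg t θ := hlo
  · calc hypArg t θ ≤ exp |t| := hhi
      _ < 1 + ε := hexp ▸ exp_lt_exp.2 ht

theorem hasDerivAt_hypDenom (t θ : ℝ) : HasDerivAt (hypDenom · θ) (hypDenom' t θ) t :=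
  (hasDerivAt_cosh t).add ((hasDerivAt_sinh t).mul_const (cos θ))

theorem hasDerivAt_hypDenom' (t θ : ℝ) : HasDerivAt (hypDenom' · θ) (hypDenom t θ) t :=
  (hasDerivAt_sinh t).add ((hasDerivAt_cosh t).mul_const (cos θ))

theorem hasDerivAt_hypArg (t θ : ℝ) : HasDerivAt (hypArg · θ) (hypArgDeriv t θ) t := by
  refine ((hasDerivAt_const t 1).div (hasDerivAt_hypDenom t θ)
    (hypDenom_pos t θ).ne').congr_deriv ?_
  rw [hypArgDeriv]
  ring

theorem hasDerivAt_hypArgDeriv (t θ : ℝ) : HasDerivAt (hypArgDeriv · θ) (hypArgDeriv2 t θ) t := by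
  have hD := (hypDenom_pos t θ).ne'
  refine ((hasDerivAt_hypDenom' t θ).neg.div ((hasDerivAt_hypDenom t θ).pow 2)
    (pow_ne_zero 2 hD)).congr_deriv ?_
  simp only [hypArgDeriv2, Pi.neg_apply, Pi.pow_apply]
  field_simp
  ring

theorem continuous_hypDenom : Continuous (uncurry hypDenom) := by
  unfold hypDenom; fun_prop

theorem continuous_hypDenom' : Continuous (uncurry hypDenom') := by
  unfold hypDenom'; fun_prop

theorem continuous_hypArg : Continuous (uncurry hypArg) :=
  continuous_const.div continuous_hypDenom fun p => (hypDenom_pos p.1 p.2).ne'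

theorem continuous_hypArgDeriv : Continuous (uncurry hypArgDeriv) :=
  continuous_hypDenom'.neg.div (continuous_hypDenom.pow 2) fun p =>
    pow_ne_zero 2 (hypDenom_pos p.1 p.2).ne'

theorem continuous_hypArgDeriv2 : Continuous (uncurry hypArgDeriv2) :=
  ((continuous_const.mul (continuous_hypDenom'.pow 2)).div (continuous_hypDenom.pow 3) fun p =>
    pow_ne_zero 3 (hypDenom_pos p.1 p.2).ne').sub
    (continuous_const.div continuous_hypDenom fun p => (hypDenom_pos p.1 p.2).ne')

@[simp] theorem hypArg_zero (θ : ℝ) : hypArg 0 θ = 1 := by simp [hypArg, hypDenom]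

@[simp] theorem hypArgDeriv_zero (θ : ℝ) : hypArgDeriv 0 θ = -cos θ := by
  simp [hypArgDeriv, hypDenom, hypDenom']

@[simp] theorem hypArgDeriv2_zero (θ : ℝ) : hypArgDeriv2 0 θ = 2 * cos θ ^ 2 - 1 := by
  simp [hypArgDeriv2, hypDenom, hypDenom']

noncomputable def hDivDeriv (f : ℝ → ℝ) (t : ℝ) : ℝ :=
  1 / π * ∫ θ in (0 : ℝ)..π, deriv f (hypArg t θ) * hypArgDeriv t θ

noncomputable def hDivDeriv2 (f : ℝ → ℝ) (t : ℝ) : ℝ :=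
  1 / π * ∫ θ in (0 : ℝ)..π,
    (deriv (deriv f) (hypArg t θ) * hypArgDeriv t θ ^ 2 + deriv f (hypArg t θ) * hypArgDeriv2 t θ)

section HDiv

variable {f : ℝ → ℝ} {S U : Set ℝ}

theorem continuousOn_comp_hypArg {g : ℝ → ℝ} (hg : ContinuousOn g S)
    (hUS : ∀ t ∈ U, ∀ θ, hypArg t θ ∈ S) :
    ContinuousOn (uncurry fun t θ => g (hypArg t θ)) (U ×ˢ univ) :=
  hg.comp continuous_hypArg.continuousOn fun p hp => hUS p.1 hp.1 p.2

theorem hasDerivAt_comp_hypArg {g : ℝ → ℝ} (hS : IsOpen S) (hg : ContDiffOn ℝ 1 g S) {t θ : ℝ}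
    (hx : hypArg t θ ∈ S) :
    HasDerivAt (fun s => g (hypArg s θ)) (deriv g (hypArg t θ) * hypArgDeriv t θ) t :=
  ((hg.contDiffAt (hS.mem_nhds hx)).differentiableAt one_ne_zero).hasDerivAt.comp t
    (hasDerivAt_hypArg t θ)

theorem hasDerivAt_hDiv (hS : IsOpen S) (hf : ContDiffOn ℝ 2 f S) (hU : IsOpen U)
    (hUS : ∀ t ∈ U, ∀ θ, hypArg t θ ∈ S) {t : ℝ} (ht : t ∈ U) :
    HasDerivAt (hDiv f) (hDivDeriv f t) t := by
  have hf' : ContDiffOn ℝ 1 (deriv f) S := hf.deriv_of_isOpen hS (by norm_num)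
  refine (hasDerivAt_intervalIntegral_of_continuousOn
    (G' := fun t θ => deriv f (hypArg t θ) * hypArgDeriv t θ) hU
    (continuousOn_comp_hypArg hf.continuousOn hUS)
    ((continuousOn_comp_hypArg hf'.continuousOn hUS).mul continuous_hypArgDeriv.continuousOn)
    (fun s hs θ => hasDerivAt_comp_hypArg hS (hf.of_le one_le_two) (hUS s hs θ))
    ht 0 π).const_mul (1 / π)

theorem continuousOn_hDivDeriv2_integrand (hS : IsOpen S) (hf : ContDiffOn ℝ 2 f S)
    (hUS : ∀ t ∈ U, ∀ θ, hypArg t θ ∈ S) :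
    ContinuousOn (uncurry fun t θ => deriv (deriv f) (hypArg t θ) * hypArgDeriv t θ ^ 2 +
      deriv f (hypArg t θ) * hypArgDeriv2 t θ) (U ×ˢ univ) := by
  have hf' : ContDiffOn ℝ 1 (deriv f) S := hf.deriv_of_isOpen hS (by norm_num)
  have hf'' : ContDiffOn ℝ 0 (deriv (deriv f)) S := hf'.deriv_of_isOpen hS le_rfl
  exact ((continuousOn_comp_hypArg hf''.continuousOn hUS).mul
    (continuous_hypArgDeriv.pow 2).continuousOn).add
    ((continuousOn_comp_hypArg hf'.continuousOn hUS).mul continuous_hypArgDeriv2.continuousOn)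

theorem hasDerivAt_hDivDeriv (hS : IsOpen S) (hf : ContDiffOn ℝ 2 f S) (hU : IsOpen U)
    (hUS : ∀ t ∈ U, ∀ θ, hypArg t θ ∈ S) {t : ℝ} (ht : t ∈ U) :
    HasDerivAt (hDivDeriv f) (hDivDeriv2 f t) t := by
  have hf' : ContDiffOn ℝ 1 (deriv f) S := hf.deriv_of_isOpen hS (by norm_num)
  refine (hasDerivAt_intervalIntegral_of_continuousOn
    (G := fun t θ => deriv f (hypArg t θ) * hypArgDeriv t θ) hU
    ((continuousOn_comp_hypArg hf'.continuousOn hUS).mul continuous_hypArgDeriv.continuousOn)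
    (continuousOn_hDivDeriv2_integrand hS hf hUS) (fun s hs θ => ?_) ht 0 π).const_mul (1 / π)
  refine ((hasDerivAt_comp_hypArg hS hf' (hUS s hs θ)).mul
    (hasDerivAt_hypArgDeriv s θ)).congr_deriv ?_
  ring

theorem continuousAt_hDivDeriv2 (hS : IsOpen S) (hf : ContDiffOn ℝ 2 f S) (hU : IsOpen U)
    (hUS : ∀ t ∈ U, ∀ θ, hypArg t θ ∈ S) {t : ℝ} (ht : t ∈ U) :
    ContinuousAt (hDivDeriv2 f) t :=
  continuousAt_const.mul <| continuousAt_intervalIntegral_of_continuousOn hU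
    (continuousOn_hDivDeriv2_integrand hS hf hUS) ht 0 π

end HDiv

theorem hDiv_zero {f : ℝ → ℝ} (hf1 : f 1 = 0) : hDiv f 0 = 0 := by
  simp [hDiv, hf1]

theorem hDivDeriv_zero (f : ℝ → ℝ) : hDivDeriv f 0 = 0 := by
  simp [hDivDeriv, integral_cos]

theorem integral_mul_cos_sq_add_mul_two_mul_cos_sq_sub_one (a b : ℝ) :
    ∫ θ in (0 : ℝ)..π, a * cos θ ^ 2 + b * (2 * cos θ ^ 2 - 1) = a * (π / 2) := by
  have hcos2 : IntervalIntegrable (fun θ => (a + 2 * b) * cos θ ^ 2) volume 0 π :=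
    (continuous_const.mul (continuous_cos.pow 2)).intervalIntegrable 0 π
  rw [integral_congr (g := fun θ => (a + 2 * b) * cos θ ^ 2 - b) fun θ _ => by ring,
    intervalIntegral.integral_sub hcos2 intervalIntegrable_const,
    intervalIntegral.integral_const_mul, integral_cos_sq]
  simp
  ring

theorem hDivDeriv2_zero (f : ℝ → ℝ) : hDivDeriv2 f 0 = deriv (deriv f) 1 / 2 := by
  simp only [hDivDeriv2, hypArg_zero, hypArgDeriv_zero, hypArgDeriv2_zero, neg_sq,
    integral_mul_cos_sq_add_mul_two_mul_cos_sq_sub_one]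
  field_simp

theorem hDiv_asymptotics_general (f : ℝ → ℝ) (hf1 : f 1 = 0)
    (hC2 : ∃ ε > (0 : ℝ), ContDiffOn ℝ 2 f (Set.Ioo (1 - ε) (1 + ε))) :
    Filter.Tendsto (hDiv f) (nhdsWithin 0 (Set.Ioi 0)) (nhds 0) ∧
    Filter.Tendsto (deriv (hDiv f)) (nhdsWithin 0 (Set.Ioi 0)) (nhds 0) ∧
    Filter.Tendsto (deriv (deriv (hDiv f))) (nhdsWithin 0 (Set.Ioi 0))
      (nhds (deriv (deriv f) 1 / 2)) := by
  obtain ⟨ε, hε, hf⟩ := hC2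
  have hS : IsOpen (Ioo (1 - ε) (1 + ε)) := isOpen_Ioo
  set U := Ioo (-log (1 + ε)) (log (1 + ε))
  have hU : IsOpen U := isOpen_Ioo
  have h0U : (0 : ℝ) ∈ U := by
    have hlog := log_pos (by linarith : 1 < 1 + ε)
    exact ⟨neg_lt_zero.2 hlog, hlog⟩
  have hUS : ∀ t ∈ U, ∀ θ, hypArg t θ ∈ Ioo (1 - ε) (1 + ε) :=
    fun t ht => hypArg_mem_Ioo hε (abs_lt.2 ht)
  have hderiv1 : EqOn (deriv (hDiv f)) (hDivDeriv f) U :=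
    fun t ht => (hasDerivAt_hDiv hS hf hU hUS ht).deriv
  have hderiv2 : EqOn (deriv (deriv (hDiv f))) (hDivDeriv2 f) U := fun t ht => by
    rw [(hderiv1.eventuallyEq_of_mem (hU.mem_nhds ht)).deriv_eq]
    exact (hasDerivAt_hDivDeriv hS hf hU hUS ht).deriv
  have hlim : ∀ {g G : ℝ → ℝ} {v : ℝ}, EqOn g G U → ContinuousAt G 0 → G 0 = v →
      Tendsto g (𝓝[>] 0) (𝓝 v) := by
    rintro g G v hgG hG rfl
    exact (hG.tendsto.mono_left nhdsWithin_le_nhds).congr'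
      (hgG.eventuallyEq_of_mem (mem_nhdsWithin_of_mem_nhds (hU.mem_nhds h0U))).symm
  exact ⟨hlim (fun _ _ => rfl) (hasDerivAt_hDiv hS hf hU hUS h0U).continuousAt (hDiv_zero hf1),
    hlim hderiv1 (hasDerivAt_hDivDeriv hS hf hU hUS h0U).continuousAt (hDivDeriv_zero f),
    hlim hderiv2 (continuousAt_hDivDeriv2 hS hf hU hUS h0U) (hDivDeriv2_zero f)⟩

theorem hDiv_asymptotics (f : ℝ → ℝ) (hconv : ConvexOn ℝ (Set.Ioi 0) f) (hf1 : f 1 = 0)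
    (hC2 : ∃ ε > (0 : ℝ), ContDiffOn ℝ 2 f (Set.Ioo (1 - ε) (1 + ε)))
    (hf'' : 0 < deriv (deriv f) 1) :
    Filter.Tendsto (hDiv f) (nhdsWithin 0 (Set.Ioi 0)) (nhds 0) ∧
    Filter.Tendsto (deriv (hDiv f)) (nhdsWithin 0 (Set.Ioi 0)) (nhds 0) ∧
    Filter.Tendsto (deriv (deriv (hDiv f))) (nhdsWithin 0 (Set.Ioi 0))
      (nhds (deriv (deriv f) 1 / 2)) :=
  hDiv_asymptotics_general f hf1 hC2
end

section
/- With h(t) = (1/π)∫_0^π f(1/(cosh t + sinh t · cos θ)) dθ and f convex on (0,∞), f(1)=0, f C² near 1, f''(1)>0, we have lim_{t→0+} h(2t)/h(t) = 4. -/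
open Real Set Filter Topology Asymptotics MeasureTheory

theorem ContDiffOn.isLittleO_taylor_two {f : ℝ → ℝ} {s : Set ℝ} {x₀ : ℝ}
    (hf : ContDiffOn ℝ 2 f s) (hs : IsOpen s) (hsc : Convex ℝ s) (hx₀ : x₀ ∈ s) :
    (fun x => f x - f x₀ - deriv f x₀ * (x - x₀) - deriv (deriv f) x₀ / 2 * (x - x₀) ^ 2)
      =o[𝓝 x₀] fun x => (x - x₀) ^ 2 := by
  have h := taylor_isLittleO hsc hx₀ hf
  rw [hs.nhdsWithin_eq hx₀] at h
  refine h.congr_left fun x => ?_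
  have h1 := iteratedDerivWithin_of_isOpen_eq_iterate (n := 1) (f := f) hs hx₀
  have h2 := iteratedDerivWithin_of_isOpen_eq_iterate (n := 2) (f := f) hs hx₀
  simp only [taylorWithinEval_succ, taylor_within_zero_eval, h1, h2, Function.iterate_succ,
    Function.iterate_zero, Function.comp_apply, id, smul_eq_mul]
  norm_num
  ring

theorem cosh_add_sinh_mul_cos (t θ : ℝ) :
    cosh t + sinh t * cos θ = exp t * ((1 + cos θ) / 2) + exp (-t) * ((1 - cos θ) / 2) := by
  rw [← cosh_add_sinh, ← cosh_sub_sinh]; ring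

theorem cosh_add_sinh_mul_cos_pos (t θ : ℝ) : 0 < cosh t + sinh t * cos θ := by
  have := exp_pos t
  have := exp_pos (-t)
  rw [cosh_add_sinh_mul_cos]
  rcases le_total (cos θ) 0 with h | h <;> nlinarith [cos_le_one θ, neg_one_le_cos θ]

theorem cosh_add_sinh_mul_cos_mem_Icc {t : ℝ} (ht : 0 ≤ t) (θ : ℝ) :
    cosh t + sinh t * cos θ ∈ Icc (exp (-t)) (exp t) := by
  have : exp (-t) ≤ exp t := exp_le_exp.mpr (by linarith)
  rw [cosh_add_sinh_mul_cos]
  constructor <;> nlinarith [neg_one_le_cos θ, cos_le_one θ]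

/-- The Poisson kernel `(1 - r²) / (1 - 2 r cos θ + r²)` at `r = -tanh (t / 2)`. -/
noncomputable def coshKernel (t θ : ℝ) : ℝ := 1 / (cosh t + sinh t * cos θ)

theorem continuous_coshKernel (t : ℝ) : Continuous (coshKernel t) :=
  continuous_const.div (by fun_prop) (cosh_add_sinh_mul_cos_pos t · |>.ne')

theorem coshKernel_mem_Icc {t : ℝ} (ht : 0 ≤ t) (θ : ℝ) :
    coshKernel t θ ∈ Icc (exp (-t)) (exp t) := by
  obtain ⟨hlo, hhi⟩ := cosh_add_sinh_mul_cos_mem_Icc ht θ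
  have hpos := cosh_add_sinh_mul_cos_pos t θ
  rw [coshKernel, one_div, exp_neg]
  exact ⟨inv_anti₀ hpos hhi, by simpa [exp_neg] using inv_anti₀ (exp_pos _) hlo⟩

theorem hasDerivAt_coshKernel_primitive (t θ : ℝ) :
    HasDerivAt
      (fun θ => θ - 2 * arctan (sinh t * sin θ / (cosh t + 1 + sinh t * cos θ)))
      (coshKernel t θ) θ := by
  have hu := cosh_add_sinh_mul_cos_pos t θ
  have hD : 0 < cosh t + 1 + sinh t * cos θ := by linarith
  refine ((hasDerivAt_id' θ).sub ((((hasDerivAt_sin θ).const_mul (sinh t)).div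
    (((hasDerivAt_cos θ).const_mul (sinh t)).const_add (cosh t + 1)) hD.ne').arctan.const_mul
    2)).congr_deriv ?_
  have hcosh : 0 < cosh t + 1 := by linarith [cosh_pos t]
  simp only [coshKernel, Pi.div_apply]
  field_simp
  linear_combination (cosh t + sinh t * cos θ + 1) *
    (cosh_sq_sub_sinh_sq t - sinh t ^ 2 * sin_sq_add_cos_sq θ)

theorem hasDerivAt_coshKernel_sq_primitive (t θ : ℝ) :
    HasDerivAt
      (fun θ => cosh t * (θ - 2 * arctan (sinh t * sin θ / (cosh t + 1 + sinh t * cos θ)))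
        - sinh t * sin θ / (cosh t + sinh t * cos θ))
      (coshKernel t θ ^ 2) θ := by
  have hu := cosh_add_sinh_mul_cos_pos t θ
  refine (((hasDerivAt_coshKernel_primitive t θ).const_mul (cosh t)).sub
    (((hasDerivAt_sin θ).const_mul (sinh t)).div
      (((hasDerivAt_cos θ).const_mul (sinh t)).const_add (cosh t)) hu.ne')).congr_deriv ?_
  simp only [coshKernel]
  field_simp
  linear_combination cosh_sq_sub_sinh_sq t - sinh t ^ 2 * sin_sq_add_cos_sq θ

theorem integral_coshKernel (t : ℝ) : ∫ θ in 0..π, coshKernel t θ = π := by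
  rw [intervalIntegral.integral_eq_sub_of_hasDerivAt
    (fun θ _ => hasDerivAt_coshKernel_primitive t θ)
    ((continuous_coshKernel t).intervalIntegrable _ _)]
  simp

theorem integral_coshKernel_sq (t : ℝ) : ∫ θ in 0..π, coshKernel t θ ^ 2 = π * cosh t := by
  rw [intervalIntegral.integral_eq_sub_of_hasDerivAt
    (fun θ _ => hasDerivAt_coshKernel_sq_primitive t θ)
    (((continuous_coshKernel t).pow 2).intervalIntegrable _ _)]
  simp only [sin_pi, sin_zero, cos_pi, cos_zero, mul_zero, zero_div, arctan_zero]
  ring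

theorem integral_coshKernel_sub_one (t : ℝ) : ∫ θ in 0..π, (coshKernel t θ - 1) = 0 := by
  rw [intervalIntegral.integral_sub ((continuous_coshKernel t).intervalIntegrable _ _)
    intervalIntegrable_const, integral_coshKernel]
  simp

theorem integral_coshKernel_sub_one_sq (t : ℝ) :
    ∫ θ in 0..π, (coshKernel t θ - 1) ^ 2 = π * (cosh t - 1) := by
  have hP := continuous_coshKernel t
  have hsq : IntervalIntegrable (fun θ => coshKernel t θ ^ 2) volume 0 π :=
    (hP.pow 2).intervalIntegrable _ _
  have hlin : IntervalIntegrable (fun θ => 2 * coshKernel t θ) volume 0 π :=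
    (hP.const_mul 2).intervalIntegrable _ _
  simp_rw [sub_sq, one_pow, mul_one]
  rw [intervalIntegral.integral_add (hsq.sub hlin) intervalIntegrable_const,
    intervalIntegral.integral_sub hsq hlin, intervalIntegral.integral_const_mul,
    integral_coshKernel, integral_coshKernel_sq, intervalIntegral.integral_const, smul_eq_mul]
  ring

theorem abs_hDiv_sub_le {f : ℝ → ℝ} {t a b δ : ℝ} (ht : 0 ≤ t)
    (hf : ContinuousOn f (Icc (exp (-t)) (exp t)))
    (hR : ∀ x ∈ Icc (exp (-t)) (exp t),
      |f x - f 1 - a * (x - 1) - b * (x - 1) ^ 2| ≤ δ * (x - 1) ^ 2) :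
    |hDiv f t - f 1 - b * (cosh t - 1)| ≤ δ * (cosh t - 1) := by
  have hP := continuous_coshKernel t
  have hfP : IntervalIntegrable (fun θ => f (coshKernel t θ)) volume 0 π :=
    (hf.comp_continuous hP (coshKernel_mem_Icc ht)).intervalIntegrable _ _
  have hlin : IntervalIntegrable (fun θ => a * (coshKernel t θ - 1)) volume 0 π :=
    ((hP.sub continuous_const).const_mul a).intervalIntegrable _ _
  have hsq : IntervalIntegrable (fun θ => b * (coshKernel t θ - 1) ^ 2) volume 0 π :=
    (((hP.sub continuous_const).pow 2).const_mul b).intervalIntegrable _ _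
  have hrem : hDiv f t - f 1 - b * (cosh t - 1) = π⁻¹ * ∫ θ in 0..π,
      (f (coshKernel t θ) - f 1 - a * (coshKernel t θ - 1) - b * (coshKernel t θ - 1) ^ 2) := by
    rw [intervalIntegral.integral_sub ((hfP.sub intervalIntegrable_const).sub hlin) hsq,
      intervalIntegral.integral_sub (hfP.sub intervalIntegrable_const) hlin,
      intervalIntegral.integral_sub hfP intervalIntegrable_const,
      intervalIntegral.integral_const_mul, intervalIntegral.integral_const_mul,
      integral_coshKernel_sub_one, integral_coshKernel_sub_one_sq]
    simp only [hDiv, coshKernel, intervalIntegral.integral_const, smul_eq_mul]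
    field_simp
    ring
  have hbound : ‖∫ θ in 0..π,
      (f (coshKernel t θ) - f 1 - a * (coshKernel t θ - 1) - b * (coshKernel t θ - 1) ^ 2)‖
        ≤ ∫ θ in 0..π, δ * (coshKernel t θ - 1) ^ 2 :=
    intervalIntegral.norm_integral_le_of_norm_le (g := fun θ => δ * (coshKernel t θ - 1) ^ 2)
      pi_pos.le (Eventually.of_forall fun θ _ => hR _ (coshKernel_mem_Icc ht θ))
      (Continuous.intervalIntegrable (by fun_prop) _ _)
  rw [Real.norm_eq_abs, intervalIntegral.integral_const_mul, integral_coshKernel_sub_one_sq]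
    at hbound
  rw [hrem, abs_mul, abs_inv, abs_of_pos pi_pos, inv_mul_le_iff₀ pi_pos]
  linarith

theorem tendsto_Icc_exp_neg_exp_smallSets :
    Tendsto (fun t => Icc (exp (-t)) (exp t)) (𝓝 0) (𝓝 1).smallSets :=
  ((continuous_exp.comp continuous_neg).tendsto' 0 1 (by simp)).Icc
    (continuous_exp.tendsto' 0 1 (by simp))

theorem isLittleO_hDiv_sub {f : ℝ → ℝ} {s : Set ℝ} (hf : ContDiffOn ℝ 2 f s)
    (hs : IsOpen s) (hsc : Convex ℝ s) (h1 : 1 ∈ s) :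
    (fun t => hDiv f t - f 1 - deriv (deriv f) 1 / 2 * (cosh t - 1))
      =o[𝓝[≥] 0] fun t => cosh t - 1 := by
  refine isLittleO_iff.mpr fun δ hδ => ?_
  have hnear : ∀ᶠ x in 𝓝 1, x ∈ s ∧ |f x - f 1 - deriv f 1 * (x - 1)
      - deriv (deriv f) 1 / 2 * (x - 1) ^ 2| ≤ δ * (x - 1) ^ 2 := by
    filter_upwards [hs.mem_nhds h1, isLittleO_iff.mp (hf.isLittleO_taylor_two hs hsc h1) hδ]
      with x hxs hx
    simpa using And.intro hxs hx
  filter_upwards [self_mem_nhdsWithin, nhdsWithin_le_nhds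
    (tendsto_Icc_exp_neg_exp_smallSets.eventually (eventually_smallSets_forall.mpr hnear))]
    with t ht hts
  rw [Real.norm_eq_abs, Real.norm_eq_abs, abs_of_nonneg (sub_nonneg.mpr (one_le_cosh t))]
  exact abs_hDiv_sub_le ht (hf.continuousOn.mono fun x hx => (hts x hx).1)
    fun x hx => (hts x hx).2

theorem tendsto_cosh_two_mul_sub_one_div_cosh_sub_one :
    Tendsto (fun t => (cosh (2 * t) - 1) / (cosh t - 1)) (𝓝[≠] 0) (𝓝 4) := by
  have hlim : Tendsto (fun t => 2 * (cosh t + 1)) (𝓝[≠] 0) (𝓝 4) := by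
    have hcont : Continuous fun t => 2 * (cosh t + 1) := by fun_prop
    convert (hcont.tendsto 0).mono_left nhdsWithin_le_nhds using 2
    norm_num
  refine hlim.congr' (eventually_nhdsWithin_of_forall fun t (ht : t ≠ 0) => ?_)
  have hcosh : cosh t - 1 ≠ 0 := sub_ne_zero.mpr (one_lt_cosh.mpr ht).ne'
  rw [eq_div_iff hcosh, cosh_two_mul]
  linear_combination cosh_sq_sub_sinh_sq t

theorem tendsto_two_mul_nhdsGT_zero : Tendsto (2 * ·) (𝓝[>] (0 : ℝ)) (𝓝[>] 0) :=
  tendsto_nhdsWithin_iff.mpr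
    ⟨((continuous_const_mul 2).tendsto' 0 0 (mul_zero 2)).mono_left nhdsWithin_le_nhds,
      eventually_nhdsWithin_of_forall fun _ ht => mem_Ioi.mpr (mul_pos two_pos ht)⟩

theorem hDiv_ratio_tendsto_four_general (f : ℝ → ℝ) (hf1 : f 1 = 0)
    (hC2 : ∃ ε > (0 : ℝ), ContDiffOn ℝ 2 f (Set.Ioo (1 - ε) (1 + ε)))
    (hf'' : 0 < deriv (deriv f) 1) :
    Filter.Tendsto (fun t => hDiv f (2 * t) / hDiv f t)
      (nhdsWithin 0 (Set.Ioi 0)) (nhds 4) := by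
  obtain ⟨ε, hε, hC2⟩ := hC2
  set c := deriv (deriv f) 1 / 2
  have hc : c ≠ 0 := (half_pos hf'').ne'
  have hequiv : hDiv f ~[𝓝[>] 0] fun t => c * (cosh t - 1) := by
    have h := (isLittleO_hDiv_sub hC2 isOpen_Ioo (convex_Ioo _ _)
      ⟨by linarith, by linarith⟩).mono (nhdsWithin_mono _ Ioi_subset_Ici_self)
    simp only [hf1, sub_zero] at h
    exact h.const_mul_right hc
  refine ((hequiv.comp_tendsto tendsto_two_mul_nhdsGT_zero).div hequiv).symm.tendsto_nhds ?_
  refine (tendsto_cosh_two_mul_sub_one_div_cosh_sub_one.mono_left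
    (nhdsWithin_mono _ fun _ ht => ne_of_gt ht)).congr fun t => ?_
  exact (mul_div_mul_left _ _ hc).symm

theorem hDiv_ratio_tendsto_four (f : ℝ → ℝ) (hconv : ConvexOn ℝ (Set.Ioi 0) f) (hf1 : f 1 = 0)
    (hC2 : ∃ ε > (0 : ℝ), ContDiffOn ℝ 2 f (Set.Ioo (1 - ε) (1 + ε)))
    (hf'' : 0 < deriv (deriv f) 1) :
    Filter.Tendsto (fun t => hDiv f (2 * t) / hDiv f t)
      (nhdsWithin 0 (Set.Ioi 0)) (nhds 4) :=
  hDiv_ratio_tendsto_four_general f hf1 hC2 hf''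
end

section
/- Let f be convex on (0,∞) with f(1)=0, f of class C² on a neighborhood of 1, and f''(1)>0, and let α > 1/2. Then D_f(p_{0,σ1} : p_{0,σ2})^α is not a metric in the scale parameter σ ∈ (0,∞): there exist σ1, σ2, σ3 > 0 with D_f(p_{0,σ1}:p_{0,σ3})^α > D_f(p_{0,σ1}:p_{0,σ2})^α + D_f(p_{0,σ2}:p_{0,σ3})^α. -/
open MeasureTheory

/-- f-divergence between centered Cauchy distributions with scales `σ₁`, `σ₂`. -/
noncomputable def fDivCauchy (f : ℝ → ℝ) (σ₁ σ₂ : ℝ) : ℝ :=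
  ∫ x, f (cauchyPdf 0 σ₂ x / cauchyPdf 0 σ₁ x) * cauchyPdf 0 σ₁ x

/-!
Rescaling both scales by the same factor leaves the divergence unchanged, so if `D(σ₁, σ₂)^α`
obeyed the triangle inequality, splitting `[1, s]` into `n` geometric steps would give
`D(1, s)^α ≤ n · D(1, s^{1/n})^α`. The likelihood ratio `p_{0,s} / p_{0,1}` stays within
`s - 1` of `1`, so for `s` close to `1` the second-order Taylor bounds of `f` at `1` give
`0 < D(1, s) ≤ f''(1) (s - 1)²`. Hence `D(1, s)^α = O(n^{1 - 2α}) → 0` as `n → ∞`, which is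
absurd for `α > 1/2`.
-/

open Real Set Filter Metric Topology

section CauchyPdf

variable {μ σ : ℝ}

lemma cauchyPdf_pos (hσ : 0 < σ) (x : ℝ) : 0 < cauchyPdf μ σ x := by
  unfold cauchyPdf
  positivity

lemma continuous_cauchyPdf (hσ : 0 < σ) : Continuous (cauchyPdf μ σ) := by
  unfold cauchyPdf
  exact continuous_const.mul (continuous_const.div (by fun_prop) fun x => by positivity)

lemma cauchyPdf_eq_inv_one_add_sq (hσ : 0 < σ) (x : ℝ) :
    cauchyPdf μ σ x = (π * σ)⁻¹ * (1 + ((x - μ) / σ) ^ 2)⁻¹ := by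
  unfold cauchyPdf
  field_simp
  ring

lemma integrable_cauchyPdf (hσ : 0 < σ) : Integrable (cauchyPdf μ σ) := by
  simp_rw [funext (cauchyPdf_eq_inv_one_add_sq (μ := μ) hσ)]
  exact ((integrable_inv_one_add_sq.comp_div hσ.ne').comp_sub_right μ).const_mul _

lemma integral_cauchyPdf (hσ : 0 < σ) : ∫ x, cauchyPdf μ σ x = 1 := by
  simp_rw [cauchyPdf_eq_inv_one_add_sq hσ, integral_const_mul]
  rw [integral_sub_right_eq_self (fun x => (1 + (x / σ) ^ 2)⁻¹) μ,
    Measure.integral_comp_div (fun y => (1 + y ^ 2)⁻¹) σ, integral_univ_inv_one_add_sq,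
    abs_of_pos hσ, smul_eq_mul]
  field_simp

lemma cauchyPdf_mul {c : ℝ} (hc : c ≠ 0) (x : ℝ) :
    cauchyPdf μ (c * σ) x = c⁻¹ * cauchyPdf (c⁻¹ * μ) σ (c⁻¹ * x) := by
  unfold cauchyPdf
  rw [show (c⁻¹ * x - c⁻¹ * μ) ^ 2 + σ ^ 2 = (c ^ 2)⁻¹ * ((x - μ) ^ 2 + (c * σ) ^ 2) by
    field_simp]
  simp only [one_div, mul_inv, inv_inv]
  field_simp

lemma cauchyPdf_div_cauchyPdf_one_sub_one {s : ℝ} (hs : 0 < s) (x : ℝ) :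
    cauchyPdf 0 s x / cauchyPdf 0 1 x - 1 = (s - 1) * (x ^ 2 - s) / (x ^ 2 + s ^ 2) := by
  unfold cauchyPdf
  field_simp
  ring

end CauchyPdf

lemma fDivCauchy_mul_mul (f : ℝ → ℝ) {c : ℝ} (hc : 0 < c) (σ₁ σ₂ : ℝ) :
    fDivCauchy f (c * σ₁) (c * σ₂) = fDivCauchy f σ₁ σ₂ := by
  have h (x : ℝ) : f (cauchyPdf 0 (c * σ₂) x / cauchyPdf 0 (c * σ₁) x) * cauchyPdf 0 (c * σ₁) x
      = c⁻¹ * (f (cauchyPdf 0 σ₂ (c⁻¹ * x) / cauchyPdf 0 σ₁ (c⁻¹ * x))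
          * cauchyPdf 0 σ₁ (c⁻¹ * x)) := by
    simp only [cauchyPdf_mul hc.ne', mul_zero, mul_div_mul_left _ _ (inv_ne_zero hc.ne')]
    ring
  rw [fDivCauchy, funext h, integral_const_mul,
    Measure.integral_comp_inv_mul_left
      (fun y => f (cauchyPdf 0 σ₂ y / cauchyPdf 0 σ₁ y) * cauchyPdf 0 σ₁ y) c,
    smul_eq_mul, abs_of_pos hc, ← mul_assoc, inv_mul_cancel₀ hc.ne', one_mul, fDivCauchy]

lemma fDivCauchy_eq_integral_add (f : ℝ → ℝ) (b : ℝ) {σ₁ σ₂ : ℝ} (h₁ : 0 < σ₁) (h₂ : 0 < σ₂)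
    (hint : Integrable fun x => (f (cauchyPdf 0 σ₂ x / cauchyPdf 0 σ₁ x) - f 1
      - b * (cauchyPdf 0 σ₂ x / cauchyPdf 0 σ₁ x - 1)) * cauchyPdf 0 σ₁ x) :
    fDivCauchy f σ₁ σ₂ = (∫ x, (f (cauchyPdf 0 σ₂ x / cauchyPdf 0 σ₁ x) - f 1
      - b * (cauchyPdf 0 σ₂ x / cauchyPdf 0 σ₁ x - 1)) * cauchyPdf 0 σ₁ x) + f 1 := by
  have h (x : ℝ) : f (cauchyPdf 0 σ₂ x / cauchyPdf 0 σ₁ x) * cauchyPdf 0 σ₁ x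
      = (f (cauchyPdf 0 σ₂ x / cauchyPdf 0 σ₁ x) - f 1
          - b * (cauchyPdf 0 σ₂ x / cauchyPdf 0 σ₁ x - 1)) * cauchyPdf 0 σ₁ x
        + (f 1 * cauchyPdf 0 σ₁ x + b * (cauchyPdf 0 σ₂ x - cauchyPdf 0 σ₁ x)) := by
    have := (cauchyPdf_pos (μ := 0) h₁ x).ne'
    field_simp
    ring
  have hp₁ := integrable_cauchyPdf (μ := 0) h₁
  have hp₂ := integrable_cauchyPdf (μ := 0) h₂
  have hq : Integrable fun x => cauchyPdf 0 σ₂ x - cauchyPdf 0 σ₁ x := hp₂.sub hp₁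
  have hlin : Integrable fun x => f 1 * cauchyPdf 0 σ₁ x
      + b * (cauchyPdf 0 σ₂ x - cauchyPdf 0 σ₁ x) := (hp₁.const_mul _).add (hq.const_mul _)
  rw [fDivCauchy, funext h, integral_add hint hlin,
    integral_add (hp₁.const_mul _) (hq.const_mul _), integral_const_mul, integral_const_mul,
    integral_sub hp₂ hp₁, integral_cauchyPdf h₁, integral_cauchyPdf h₂]
  ring

section IntegralAgainstCauchyPdf

variable {G : ℝ → ℝ} {σ : ℝ}

lemma integral_mul_cauchyPdf_le (hσ : 0 < σ) (hG : Integrable fun x => G x * cauchyPdf 0 σ x)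
    {K : ℝ} (hK : ∀ x, G x ≤ K) : ∫ x, G x * cauchyPdf 0 σ x ≤ K := by
  calc ∫ x, G x * cauchyPdf 0 σ x ≤ ∫ x, K * cauchyPdf 0 σ x :=
        integral_mono hG ((integrable_cauchyPdf hσ).const_mul K)
          fun x => mul_le_mul_of_nonneg_right (hK x) (cauchyPdf_pos hσ x).le
    _ = K := by rw [integral_const_mul, integral_cauchyPdf hσ, mul_one]

lemma integral_mul_cauchyPdf_pos (hσ : 0 < σ) (hG : Integrable fun x => G x * cauchyPdf 0 σ x)
    (hG₀ : ∀ x, 0 ≤ G x) {c : ℝ} (hc : ∀ x, c < x → 0 < G x) :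
    0 < ∫ x, G x * cauchyPdf 0 σ x := by
  refine (integral_pos_iff_support_of_nonneg
    (fun x => mul_nonneg (hG₀ x) (cauchyPdf_pos hσ x).le) hG).mpr ?_
  have hsupp : Ioi c ⊆ Function.support fun x => G x * cauchyPdf 0 σ x :=
    fun x hx => (mul_pos (hc x hx) (cauchyPdf_pos hσ x)).ne'
  exact (by simp : (0 : ENNReal) < volume (Ioi c)).trans_le (measure_mono hsupp)

end IntegralAgainstCauchyPdf

section LikelihoodRatio

variable {s : ℝ}

lemma cauchyPdf_div_cauchyPdf_one_mem_closedBall (hs : 1 ≤ s) (x : ℝ) :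
    cauchyPdf 0 s x / cauchyPdf 0 1 x ∈ closedBall 1 (s - 1) := by
  have hden : 0 < x ^ 2 + s ^ 2 := by positivity
  rw [mem_closedBall, dist_eq, cauchyPdf_div_cauchyPdf_one_sub_one (by linarith), abs_le,
    le_div_iff₀ hden, div_le_iff₀ hden]
  have h₁ : 0 ≤ s - 1 := by linarith
  constructor <;> nlinarith [mul_nonneg h₁ (sq_nonneg x), mul_nonneg h₁ (mul_nonneg h₁ h₁)]

lemma cauchyPdf_div_cauchyPdf_one_ne_one (hs : 1 < s) {x : ℝ} (hx : s < x) :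
    cauchyPdf 0 s x / cauchyPdf 0 1 x ≠ 1 := by
  rw [← sub_ne_zero, cauchyPdf_div_cauchyPdf_one_sub_one (by linarith)]
  have : 0 < x ^ 2 - s := by nlinarith
  positivity

end LikelihoodRatio

lemma fDivCauchy_one_bounds {f : ℝ → ℝ} {b K s : ℝ} (hs : 1 < s)
    (hf : ContinuousOn f (closedBall 1 (s - 1)))
    (hpos : ∀ u ∈ closedBall 1 (s - 1), u ≠ 1 → 0 < f u - f 1 - b * (u - 1))
    (hK : ∀ u ∈ closedBall 1 (s - 1), f u - f 1 - b * (u - 1) ≤ K) :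
    f 1 < fDivCauchy f 1 s ∧ fDivCauchy f 1 s ≤ f 1 + K := by
  set r : ℝ → ℝ := fun x => cauchyPdf 0 s x / cauchyPdf 0 1 x
  set G : ℝ → ℝ := fun x => f (r x) - f 1 - b * (r x - 1)
  have hr : ∀ x, r x ∈ closedBall 1 (s - 1) :=
    cauchyPdf_div_cauchyPdf_one_mem_closedBall hs.le
  have hr_cont : Continuous r := (continuous_cauchyPdf (by linarith)).div
    (continuous_cauchyPdf one_pos) fun x => (cauchyPdf_pos one_pos x).ne'
  have hG₀ (x : ℝ) : 0 ≤ G x := by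
    rcases eq_or_ne (r x) 1 with h | h
    · simp [G, h]
    · exact (hpos _ (hr x) h).le
  have hG_cont : Continuous G := ((hf.comp_continuous hr_cont hr).sub continuous_const).sub
    (continuous_const.mul (hr_cont.sub continuous_const))
  have hint : Integrable fun x => G x * cauchyPdf 0 1 x :=
    (integrable_cauchyPdf one_pos).bdd_mul hG_cont.aestronglyMeasurable
      (ae_of_all _ fun x => (norm_of_nonneg (hG₀ x)).trans_le (hK _ (hr x)))
  rw [fDivCauchy_eq_integral_add f b one_pos (by linarith) hint]
  constructor
  · have := integral_mul_cauchyPdf_pos one_pos hint hG₀ fun x hx =>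
      hpos _ (hr x) (cauchyPdf_div_cauchyPdf_one_ne_one hs hx)
    linarith
  · have := integral_mul_cauchyPdf_le one_pos hint fun x => hK _ (hr x)
    linarith

lemma ConvexOn.add_deriv_mul_sub_le {S : Set ℝ} {φ : ℝ → ℝ} (hφ : ConvexOn ℝ S φ) {a u : ℝ}
    (ha : a ∈ S) (hu : u ∈ S) (hd : DifferentiableAt ℝ φ a) :
    φ a + deriv φ a * (u - a) ≤ φ u := by
  rcases lt_trichotomy u a with h | rfl | h
  · have := hφ.slope_le_deriv hu ha h hd
    rw [slope_def_field, div_le_iff₀ (sub_pos.2 h)] at this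
    linarith
  · simp
  · have := hφ.deriv_le_slope ha hu h hd
    rw [slope_def_field, le_div_iff₀ (sub_pos.2 h)] at this
    linarith

section SecondDerivative

variable {D : Set ℝ} {f : ℝ → ℝ} {a u : ℝ}

lemma mul_sq_le_of_le_deriv2 (hD : Convex ℝ D) (hDo : IsOpen D) (hf : DifferentiableOn ℝ f D)
    (hf' : DifferentiableOn ℝ (deriv f) D) {m : ℝ} (hm : ∀ x ∈ D, m ≤ deriv (deriv f) x)
    (ha : a ∈ D) (hu : u ∈ D) :
    m / 2 * (u - a) ^ 2 ≤ f u - f a - deriv f a * (u - a) := by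
  set φ : ℝ → ℝ := fun x => f x - m / 2 * x ^ 2
  have hφ (x : ℝ) (hx : x ∈ D) : HasDerivAt φ (deriv f x - m * x) x := by
    have hsq : HasDerivAt (fun x => m / 2 * x ^ 2) (m * x) x :=
      ((hasDerivAt_pow 2 x).const_mul (m / 2)).congr_deriv (by ring)
    exact ((hf x hx).differentiableAt (hDo.mem_nhds hx)).hasDerivAt.sub hsq
  have hmono : MonotoneOn (deriv φ) D := by
    refine MonotoneOn.congr (f₁ := fun x => deriv f x - m * x) ?_ fun x hx => (hφ x hx).deriv.symm
    intro x hx y hy hxy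
    have := hD.mul_sub_le_image_sub_of_le_deriv hf'.continuousOn (hf'.mono interior_subset)
      (fun z hz => hm z (interior_subset hz)) x hx y hy hxy
    dsimp only
    linarith
  have hφ_conv : ConvexOn ℝ D φ := by
    refine MonotoneOn.convexOn_of_deriv hD (fun x hx => (hφ x hx).continuousAt.continuousWithinAt)
      ?_ ?_ <;> rw [hDo.interior_eq]
    · exact fun x hx => (hφ x hx).differentiableAt.differentiableWithinAt
    · exact hmono
  have := hφ_conv.add_deriv_mul_sub_le ha hu (hφ a ha).differentiableAt
  rw [(hφ a ha).deriv] at this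
  linear_combination this

lemma le_mul_sq_of_deriv2_le (hD : Convex ℝ D) (hDo : IsOpen D) (hf : DifferentiableOn ℝ f D)
    (hf' : DifferentiableOn ℝ (deriv f) D) {M : ℝ} (hM : ∀ x ∈ D, deriv (deriv f) x ≤ M)
    (ha : a ∈ D) (hu : u ∈ D) :
    f u - f a - deriv f a * (u - a) ≤ M / 2 * (u - a) ^ 2 := by
  have := mul_sq_le_of_le_deriv2 (f := fun x => -f x) (m := -M) hD hDo hf.neg
    (by rw [deriv.fun_neg']; exact hf'.neg)
    (fun x hx => by rw [deriv.fun_neg', deriv.fun_neg']; linarith [hM x hx]) ha hu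
  rw [deriv.fun_neg'] at this
  linarith

lemma exists_sq_bounds_of_contDiffOn {U : Set ℝ} (hU : IsOpen U) (ha : a ∈ U)
    (hf : ContDiffOn ℝ 2 f U) (hpos : 0 < deriv (deriv f) a) :
    ∃ δ > 0, ball a δ ⊆ U ∧ ∀ u ∈ ball a δ,
      deriv (deriv f) a / 4 * (u - a) ^ 2 ≤ f u - f a - deriv f a * (u - a) ∧
      f u - f a - deriv f a * (u - a) ≤ 3 * deriv (deriv f) a / 4 * (u - a) ^ 2 := by
  set c := deriv (deriv f) a
  have hf₁ : ContDiffOn ℝ 1 (deriv f) U := hf.deriv_of_isOpen hU (by norm_num)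
  have hc : ContinuousAt (deriv (deriv f)) a :=
    (hf₁.continuousOn_deriv_of_isOpen hU le_rfl).continuousAt (hU.mem_nhds ha)
  obtain ⟨δ, hδ, hball⟩ := Metric.eventually_nhds_iff_ball.mp
    ((hc.eventually (Ioo_mem_nhds (by linarith : c / 2 < c) (by linarith : c < 3 * c / 2))).and
      (hU.mem_nhds ha))
  have hsub : ball a δ ⊆ U := fun x hx => (hball x hx).2
  have hD := (hf.differentiableOn two_ne_zero).mono hsub
  have hD' := (hf₁.differentiableOn one_ne_zero).mono hsub
  refine ⟨δ, hδ, hsub, fun u hu => ⟨?_, ?_⟩⟩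
  · have := mul_sq_le_of_le_deriv2 (convex_ball a δ) isOpen_ball hD hD'
      (fun x hx => (hball x hx).1.1.le) (mem_ball_self hδ) hu
    linarith
  · have := le_mul_sq_of_deriv2_le (convex_ball a δ) isOpen_ball hD hD'
      (fun x hx => (hball x hx).1.2.le) (mem_ball_self hδ) hu
    linarith

end SecondDerivative

lemma exists_fDivCauchy_one_bounds {f : ℝ → ℝ} {U : Set ℝ} (hU : IsOpen U) (h1 : (1 : ℝ) ∈ U)
    (hf : ContDiffOn ℝ 2 f U) (hpos : 0 < deriv (deriv f) 1) :
    ∃ δ > 0, ∀ s, 1 < s → s < 1 + δ →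
      f 1 < fDivCauchy f 1 s ∧ fDivCauchy f 1 s ≤ f 1 + deriv (deriv f) 1 * (s - 1) ^ 2 := by
  obtain ⟨δ, hδ, hsub, hg⟩ := exists_sq_bounds_of_contDiffOn hU h1 hf hpos
  refine ⟨δ, hδ, fun s hs hsδ => ?_⟩
  have hball : closedBall (1 : ℝ) (s - 1) ⊆ ball 1 δ := closedBall_subset_ball (by linarith)
  refine fDivCauchy_one_bounds (b := deriv f 1) hs ((hf.continuousOn.mono hsub).mono hball) ?_ ?_
  · intro u hu hu1
    have := sub_ne_zero.2 hu1
    exact (by positivity : 0 < deriv (deriv f) 1 / 4 * (u - 1) ^ 2).trans_le (hg u (hball hu)).1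
  · intro u hu
    have hu' : (u - 1) ^ 2 ≤ (s - 1) ^ 2 := by
      rw [← sq_abs]
      exact pow_le_pow_left₀ (abs_nonneg _) (by simpa [dist_eq] using hu) 2
    nlinarith [(hg u (hball hu)).2]

lemma tendsto_nat_mul_exp_div_sub_one_rpow {L β : ℝ} (hL : 0 ≤ L) (hβ : 1 < β) :
    Tendsto (fun n : ℕ => n * (exp (L / n) - 1) ^ β) atTop (𝓝 0) := by
  have hdecay : Tendsto (fun n : ℕ => (2 * L) ^ β * (n : ℝ) ^ (-(β - 1))) atTop (𝓝 0) := by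
    simpa using ((tendsto_rpow_neg_atTop (by linarith : 0 < β - 1)).comp
      tendsto_natCast_atTop_atTop).const_mul ((2 * L) ^ β)
  refine tendsto_of_tendsto_of_tendsto_of_le_of_le' tendsto_const_nhds hdecay ?_ ?_
  · filter_upwards with n
    have : 0 ≤ exp (L / n) - 1 := sub_nonneg.2 (one_le_exp (by positivity))
    positivity
  · filter_upwards [eventually_ge_atTop 1, eventually_ge_atTop ⌈L⌉₊] with n hn hnL
    have hn' : (0 : ℝ) < n := by exact_mod_cast hn
    have hLn : L / n ≤ 1 := (div_le_one hn').2 (Nat.ceil_le.1 hnL)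
    have hexp : 0 ≤ exp (L / n) - 1 := sub_nonneg.2 (one_le_exp (by positivity))
    have hle : exp (L / n) - 1 ≤ 2 * L / n := by
      have := abs_exp_sub_one_le (x := L / n) (by rwa [abs_of_nonneg (by positivity)])
      rwa [abs_of_nonneg hexp, abs_of_nonneg (by positivity), ← mul_div_assoc] at this
    calc (n : ℝ) * (exp (L / n) - 1) ^ β ≤ n * (2 * L / n) ^ β := by gcongr
      _ = (2 * L) ^ β * (n : ℝ) ^ (-(β - 1)) := by
        rw [div_rpow (by positivity) hn'.le, rpow_neg hn'.le, rpow_sub_one hn'.ne']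
        field_simp

lemma le_nat_mul_of_triangle {d : ℝ → ℝ → ℝ}
    (htri : ∀ a b c : ℝ, 0 < a → 0 < b → 0 < c → d a c ≤ d a b + d b c)
    (hscale : ∀ c a b : ℝ, 0 < c → d (c * a) (c * b) = d a b) {s : ℝ} (hs : 0 < s) {n : ℕ}
    (hn : 1 ≤ n) : d 1 (s ^ n) ≤ n * d 1 s := by
  induction n, hn using Nat.le_induction with
  | base => simp
  | succ n hn ih =>
    calc d 1 (s ^ (n + 1)) ≤ d 1 (s ^ n) + d (s ^ n) (s ^ (n + 1)) :=
          htri _ _ _ one_pos (pow_pos hs n) (pow_pos hs _)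
      _ = d 1 (s ^ n) + d 1 s := by
          rw [← hscale (s ^ n) 1 s (pow_pos hs n), mul_one, pow_succ]
      _ ≤ (n + 1 : ℕ) * d 1 s := by push_cast; linarith

lemma nonpos_of_triangle_of_le_mul_rpow {d : ℝ → ℝ → ℝ}
    (htri : ∀ a b c : ℝ, 0 < a → 0 < b → 0 < c → d a c ≤ d a b + d b c)
    (hscale : ∀ c a b : ℝ, 0 < c → d (c * a) (c * b) = d a b) {s₀ C β : ℝ} (hs₀ : 1 < s₀)
    (hβ : 1 < β) (hd : ∀ s, 1 < s → s ≤ s₀ → d 1 s ≤ C * (s - 1) ^ β) : d 1 s₀ ≤ 0 := by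
  set L := log s₀
  have hL : 0 < L := log_pos hs₀
  have hchain : ∀ᶠ n : ℕ in atTop, d 1 s₀ ≤ C * (n * (exp (L / n) - 1) ^ β) := by
    filter_upwards [eventually_ge_atTop 1] with n hn
    have hn' : (0 : ℝ) < n := by exact_mod_cast hn
    have h₁ : 1 < exp (L / n) := one_lt_exp_iff.2 (div_pos hL hn')
    have h₂ : exp (L / n) ≤ s₀ := by
      calc exp (L / n) ≤ exp L := exp_le_exp.2 (div_le_self hL.le (by exact_mod_cast hn))
        _ = s₀ := exp_log (by linarith)
    calc d 1 s₀ = d 1 (exp (L / n) ^ n) := by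
          rw [← exp_nat_mul, mul_div_cancel₀ _ hn'.ne', exp_log (by linarith)]
      _ ≤ n * d 1 (exp (L / n)) := le_nat_mul_of_triangle htri hscale (exp_pos _) hn
      _ ≤ n * (C * (exp (L / n) - 1) ^ β) := by gcongr; exact hd _ h₁ h₂
      _ = C * (n * (exp (L / n) - 1) ^ β) := by ring
  simpa using ge_of_tendsto ((tendsto_nat_mul_exp_div_sub_one_rpow hL.le hβ).const_mul C) hchain

theorem fDiv_pow_not_metric_general (f : ℝ → ℝ) (hf1 : f 1 = 0)
    (hC2 : ∃ ε > (0 : ℝ), ContDiffOn ℝ 2 f (Set.Ioo (1 - ε) (1 + ε)))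
    (hf'' : 0 < deriv (deriv f) 1) (α : ℝ) (hα : 1 / 2 < α) :
    ∃ σ₁ σ₂ σ₃ : ℝ, 0 < σ₁ ∧ 0 < σ₂ ∧ 0 < σ₃ ∧
      fDivCauchy f σ₁ σ₃ ^ α > fDivCauchy f σ₁ σ₂ ^ α + fDivCauchy f σ₂ σ₃ ^ α := by
  by_contra! htri
  obtain ⟨ε, hε, hf⟩ := hC2
  obtain ⟨δ, hδ, hD⟩ := exists_fDivCauchy_one_bounds isOpen_Ioo
    (⟨by linarith, by linarith⟩ : (1 : ℝ) ∈ Ioo (1 - ε) (1 + ε)) hf hf''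
  simp only [hf1, zero_add] at hD
  have hle : ∀ s, 1 < s → s ≤ 1 + δ / 2 →
      fDivCauchy f 1 s ^ α ≤ deriv (deriv f) 1 ^ α * (s - 1) ^ (2 * α) := by
    intro s hs hsδ
    obtain ⟨hpos, hupper⟩ := hD s hs (by linarith)
    calc fDivCauchy f 1 s ^ α ≤ (deriv (deriv f) 1 * (s - 1) ^ 2) ^ α :=
          rpow_le_rpow hpos.le hupper (by linarith)
      _ = deriv (deriv f) 1 ^ α * (s - 1) ^ (2 * α) := by
          rw [mul_rpow hf''.le (sq_nonneg _), ← rpow_natCast, ← rpow_mul (by linarith)]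
          norm_num
  have := nonpos_of_triangle_of_le_mul_rpow (d := fun a b => fDivCauchy f a b ^ α) htri
    (fun c a b hc => by simp only [fDivCauchy_mul_mul f hc]) (by linarith) (by linarith) hle
  exact (rpow_pos_of_pos (hD (1 + δ / 2) (by linarith) (by linarith)).1 α).not_ge this

theorem fDiv_pow_not_metric (f : ℝ → ℝ) (hconv : ConvexOn ℝ (Set.Ioi 0) f) (hf1 : f 1 = 0)
    (hC2 : ∃ ε > (0 : ℝ), ContDiffOn ℝ 2 f (Set.Ioo (1 - ε) (1 + ε)))
    (hf'' : 0 < deriv (deriv f) 1) (α : ℝ) (hα : 1 / 2 < α) :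
    ∃ σ₁ σ₂ σ₃ : ℝ, 0 < σ₁ ∧ 0 < σ₂ ∧ 0 < σ₃ ∧
      fDivCauchy f σ₁ σ₃ ^ α > fDivCauchy f σ₁ σ₂ ^ α + fDivCauchy f σ₂ σ₃ ^ α :=
  fDiv_pow_not_metric_general f hf1 hC2 hf'' α hα
end
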